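/- arXiv:2502.21184 — 6 statements merged into one kernel-verified Lean document; each statement's English description precedes it below -/
import Mathlib

section
/- Let L be a finite distributive lattice of subspaces of a vector space with a common basis E (each subspace in L is spanned by its intersection with E). For each join-irreducible element V_i of L, let E^i ⊂ E consist of those basis vectors lying in V_i but in no proper subspace V_j ⊊ V_i of L. Then E^i is a basis of the minimal subquotient K_i = V_i / Σ_{V_j ⊊ V_i} V_j, where the sum is over join-irreducibles V_j strictly contained in V_i. -/
/-!
By finiteness of `L`, every member of `L` strictly below `Vi` is a join of join-irreducible
members strictly below `Vi`, so `W` contains every proper member `Vj ⊊ Vi` of `L`; conversely a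
basis vector lying in `W`, a sum of subspaces spanned by basis vectors, lies in one of them.
Hence the basis vectors of `E^i` are exactly those in `Vi` but not in `W`. Since `Vi` and `W` are
both spanned by the basis vectors they contain, the remaining basis vectors of `Vi` span a
complement of `W` in `Vi`, which the quotient map identifies with `Vi / W`.
-/

open Submodule Set

/-- Unlike Mathlib's `SupIrred`, this does not exclude minimal elements. -/
def SupIrredIn {α : Type*} [Lattice α] (L : Set α) (x : α) : Prop :=
  ∀ a ∈ L, ∀ b ∈ L, x = a ⊔ b → x = a ∨ x = b

theorem Set.Finite.sSup_supIrredIn_le_eq {α : Type*} [CompleteLattice α] {L : Set α}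
    (hL : L.Finite) {x : α} (hx : x ∈ L) :
    sSup {y | y ∈ L ∧ SupIrredIn L y ∧ y ≤ x} = x := by
  refine le_antisymm (sSup_le fun y hy => hy.2.2) ?_
  refine (hL.wellFoundedOn (r := (· < ·))).induction hx
    (P := fun x => x ≤ sSup {y | y ∈ L ∧ SupIrredIn L y ∧ y ≤ x}) fun x hx ih => ?_
  by_cases hirr : SupIrredIn L x
  · exact le_sSup ⟨hx, hirr, le_rfl⟩
  simp only [SupIrredIn, not_forall, not_or] at hirr
  obtain ⟨a, ha, b, hb, rfl, hxa, hxb⟩ := hirr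
  have below : ∀ c ∈ L, c < a ⊔ b →
      c ≤ sSup {y | y ∈ L ∧ SupIrredIn L y ∧ y ≤ a ⊔ b} := fun c hc hlt =>
      (ih c hc hlt).trans (sSup_le_sSup fun y hy => ⟨hy.1, hy.2.1, hy.2.2.trans hlt.le⟩)
  exact sup_le (below a ha (lt_of_le_of_ne le_sup_left (Ne.symm hxa)))
    (below b hb (lt_of_le_of_ne le_sup_right (Ne.symm hxb)))

section LinearIndepOn

variable {R M : Type*} [Ring R] [AddCommGroup M] [Module R M]

theorem isCompl_comap_span_span_sdiff {s t : Set M} (hs : LinearIndepOn R id s) (hts : t ⊆ s) :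
    IsCompl ((span R t).comap (span R s).subtype)
      (span R (range fun x : ↥(s \ t) => (⟨x, subset_span x.2.1⟩ : span R s))) := by
  have hmap : (span R (range fun x : ↥(s \ t) => (⟨x, subset_span x.2.1⟩ : span R s))).map
      (span R s).subtype = span R (s \ t) := by
    rw [← span_image, ← range_comp]
    exact congrArg (span R) Subtype.range_coe
  have hdisj : Disjoint (span R (s \ t)) (span R t) :=
    ((linearIndepOn_id_union_iff disjoint_sdiff_left).mp
      (by rwa [sdiff_union_of_subset hts])).2.2
  constructor
  · rw [disjoint_def]
    intro x hxt hx
    have hx' : (x : M) ∈ span R (s \ t) := hmap ▸ mem_map_of_mem hx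
    exact Subtype.ext (disjoint_def.mp hdisj _ hx' hxt)
  · rw [codisjoint_iff]
    apply map_injective_of_injective (span R s).injective_subtype
    rw [Submodule.map_sup, hmap, map_comap_subtype, map_subtype_top,
      inf_eq_right.mpr (span_mono hts), ← span_union, union_sdiff_cancel hts]

theorem exists_basis_quotient_of_linearIndepOn {s t : Set M} (hs : LinearIndepOn R id s)
    (hts : t ⊆ s) {V W : Submodule R M} (hV : span R s = V) (hW : span R t = W) :
    ∃ b : Module.Basis ↥(s \ t) R (V ⧸ W.comap V.subtype),
      ∀ x, b x = Submodule.Quotient.mk ⟨x, hV ▸ subset_span x.2.1⟩ := by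
  subst hV hW
  have hli : LinearIndependent R fun x : ↥(s \ t) => (⟨x, subset_span x.2.1⟩ : span R s) :=
    LinearIndependent.of_comp (span R s).subtype (hs.mono sdiff_subset)
  exact ⟨(Module.Basis.span hli).map
    (quotientEquivOfIsCompl _ _ (isCompl_comap_span_span_sdiff hs hts)).symm, fun x => by simp⟩

end LinearIndepOn

namespace Module.Basis

variable {R M ι : Type*} [Ring R] [AddCommGroup M] [Module R M] (e : Basis ι R M)
  {S : Set (Submodule R M)}

theorem sSup_eq_span_range_inter (hS : ∀ V ∈ S, V = span R (range e ∩ V)) :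
    sSup S = span R (range e ∩ ↑(sSup S)) := by
  refine le_antisymm (sSup_le fun V hV => ?_) (span_le.mpr inter_subset_right)
  exact (hS V hV).trans_le (span_mono (inter_subset_inter_right _ (le_sSup hV)))

theorem apply_mem_sSup_iff [Nontrivial R] (hS : ∀ V ∈ S, V = span R (range e ∩ V)) {i : ι} :
    e i ∈ sSup S ↔ ∃ V ∈ S, e i ∈ V := by
  refine ⟨fun hi => ?_, fun ⟨V, hV, hi⟩ => mem_sSup_of_mem hV hi⟩
  by_contra! hnot
  have hle : sSup S ≤ span R (e '' {i}ᶜ) := sSup_le fun V hV => by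
    rw [hS V hV]
    refine span_mono ?_
    rintro _ ⟨⟨j, rfl⟩, hj⟩
    exact ⟨j, fun hji => hnot V hV (hji ▸ hj), rfl⟩
  exact (e.self_mem_span_image.mp (hle hi)) rfl

end Module.Basis

theorem stmt_7_general {K U ι : Type*} [Field K] [AddCommGroup U] [Module K U]
    (L : Set (Submodule K U)) (hLfin : L.Finite)
    (e : Module.Basis ι K U)
    (hcommon : ∀ V ∈ L, V = Submodule.span K (Set.range e ∩ (V : Set U)))
    (Vi : Submodule K U) (hVi : Vi ∈ L)
    (W : Submodule K U)
    (hW : W = sSup {Vj | Vj ∈ L ∧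
      (∀ W₁ ∈ L, ∀ W₂ ∈ L, Vj = W₁ ⊔ W₂ → Vj = W₁ ∨ Vj = W₂) ∧ Vj < Vi}) :
    ∃ b : Module.Basis {v : U // v ∈ Set.range e ∧ v ∈ Vi ∧ ∀ Vj ∈ L, Vj < Vi → v ∉ Vj} K
        (Vi ⧸ (W.comap Vi.subtype)),
      ∀ v, b v = Submodule.Quotient.mk ⟨v.1, v.2.2.1⟩ := by
  have hspan_irr : ∀ V ∈ {Vj | Vj ∈ L ∧ SupIrredIn L Vj ∧ Vj < Vi},
      V = span K (range e ∩ (V : Set U)) := fun V hV => hcommon V hV.1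
  have hWVi : W ≤ Vi := hW ▸ sSup_le fun V hV => hV.2.2.le
  have hle_W : ∀ Vj ∈ L, Vj < Vi → Vj ≤ W := fun Vj hVj hlt =>
    hW ▸ (hLfin.sSup_supIrredIn_le_eq hVj).ge.trans
      (sSup_le_sSup fun V hV => ⟨hV.1, hV.2.1, hV.2.2.trans_lt hlt⟩)
  obtain ⟨b, hb⟩ := exists_basis_quotient_of_linearIndepOn
    (e.linearIndependent.linearIndepOn_id.mono inter_subset_left)
    (inter_subset_inter_right _ hWVi) (hcommon Vi hVi).symm
    (hW ▸ e.sSup_eq_span_range_inter hspan_irr).symm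
  have hindex : ∀ v : U, v ∈ (range e ∩ Vi) \ (range e ∩ W) ↔
      v ∈ range e ∧ v ∈ Vi ∧ ∀ Vj ∈ L, Vj < Vi → v ∉ Vj := by
    refine fun v =>
      ⟨fun ⟨⟨he, hvVi⟩, hvW⟩ => ⟨he, hvVi, fun Vj hVj hlt hv => ?_⟩, ?_⟩
    · exact hvW ⟨he, hle_W Vj hVj hlt hv⟩
    · rintro ⟨⟨i, rfl⟩, hvVi, hnot⟩
      refine ⟨⟨⟨i, rfl⟩, hvVi⟩, fun ⟨_, hvW⟩ => ?_⟩
      obtain ⟨Vj, ⟨hVj, -, hlt⟩, hv⟩ := (e.apply_mem_sSup_iff hspan_irr).mp (hW ▸ hvW)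
      exact hnot Vj hVj hlt hv
  refine ⟨b.reindex (Equiv.subtypeEquivRight hindex), fun v => ?_⟩
  rw [Module.Basis.reindex_apply, hb]
  rfl

/-- Let `L` be a finite lattice of subspaces (closed under `⊓` and `⊔`) with a common
basis `e` (each member of `L` is spanned by the basis vectors it contains).  Let `Vi`
be a join-irreducible member of `L` and let `W` be the sum of all join-irreducible
members of `L` strictly contained in `Vi`.  Then the basis vectors lying in `Vi` but
in no proper member `Vj ⊊ Vi` of `L` form (via the quotient map) a basis of the
minimal subquotient `Vi / W`. -/
theorem stmt_7 {K U ι : Type*} [Field K] [AddCommGroup U] [Module K U]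
    (L : Set (Submodule K U)) (hLfin : L.Finite)
    (hinf : ∀ V ∈ L, ∀ W ∈ L, V ⊓ W ∈ L) (hsup : ∀ V ∈ L, ∀ W ∈ L, V ⊔ W ∈ L)
    (e : Module.Basis ι K U)
    (hcommon : ∀ V ∈ L, V = Submodule.span K (Set.range e ∩ (V : Set U)))
    (Vi : Submodule K U) (hVi : Vi ∈ L)
    (hirr : ∀ W₁ ∈ L, ∀ W₂ ∈ L, Vi = W₁ ⊔ W₂ → Vi = W₁ ∨ Vi = W₂)
    (W : Submodule K U)
    (hW : W = sSup {Vj | Vj ∈ L ∧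
      (∀ W₁ ∈ L, ∀ W₂ ∈ L, Vj = W₁ ⊔ W₂ → Vj = W₁ ∨ Vj = W₂) ∧ Vj < Vi}) :
    ∃ b : Module.Basis {v : U // v ∈ Set.range e ∧ v ∈ Vi ∧ ∀ Vj ∈ L, Vj < Vi → v ∉ Vj} K
        (Vi ⧸ (W.comap Vi.subtype)),
      ∀ v, b v = Submodule.Quotient.mk ⟨v.1, v.2.2.1⟩ :=
  stmt_7_general L hLfin e hcommon Vi hVi W hW
end

section
/- Let (S, v) be an arborescent poset with consistent anti-linearization v : S ↪ [1,m]. If (i,j) is a minimal S-disorder for an S-dominant composition d = (d_1,...,d_m), then the composition (ij)·d obtained by swapping d_i and d_j is again S-dominant, and d is strictly less than (ij)·d in the Bruhat partial order on the S_m-orbit of d. -/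
/-- An arborescent poset with consistent anti-linearization: a poset `S` with an
order-reversing injection `v : S → Fin m` such that whenever `v s < v t < v r` and
`r < s`, also `r < t`. -/
structure AntiLin (S : Type*) [PartialOrder S] (m : ℕ) where
  v : S → Fin m
  inj : Function.Injective v
  anti : ∀ ⦃s t : S⦄, t < s → v s < v t
  cons : ∀ ⦃s t r : S⦄, v s < v t → v t < v r → r < s → r < t

/-- A composition `d` is `S`-dominant: it vanishes outside the image of `v`, and
`d (v t) ≤ d (v s)` whenever `t < s` in `S`. -/
def SDominant {S : Type*} [PartialOrder S] {m : ℕ} (A : AntiLin S m)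
    (d : Fin m → ℕ) : Prop :=
  (∀ l : Fin m, (∀ s : S, A.v s ≠ l) → d l = 0) ∧
  (∀ s t : S, t < s → d (A.v t) ≤ d (A.v s))

/-- `(i, j)` is a minimal `S`-disorder for the composition `d`: `i < j`, the preimages
of `i` and `j` under `v` are incomparable, `d i > d j`, and for every `l` with
`i < l < j` lying in the image of `v`: if `v⁻¹ l ≺ v⁻¹ i` then `d l ≤ d j`; if
`v⁻¹ l ≻ v⁻¹ j` then `d l ≥ d i`; and if `v⁻¹ l` is incomparable with both then
`d l ∉ [d j, d i]`. -/
def MinDisorder {S : Type*} [PartialOrder S] {m : ℕ} (A : AntiLin S m)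
    (d : Fin m → ℕ) (i j : Fin m) : Prop :=
  i < j ∧ d j < d i ∧
  ∃ si sj : S, A.v si = i ∧ A.v sj = j ∧ ¬ si ≤ sj ∧ ¬ sj ≤ si ∧
    ∀ (l : Fin m) (sl : S), A.v sl = l → i < l → l < j →
      (sl < si → d l ≤ d j) ∧ (sj < sl → d i ≤ d l) ∧
      ((¬ sl ≤ si ∧ ¬ si ≤ sl ∧ ¬ sl ≤ sj ∧ ¬ sj ≤ sl) →
        ¬(d j ≤ d l ∧ d l ≤ d i))

/-- One step up in the Bruhat order on compositions: swap two entries in disorder. -/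
def BruhatStep {m : ℕ} (d d' : Fin m → ℕ) : Prop :=
  ∃ i j : Fin m, i < j ∧ d j < d i ∧ d' = d ∘ Equiv.swap i j

/-- The Bruhat partial order on (an `S_m`-orbit of) compositions: the reflexive
transitive closure of disorder swaps. -/
def BruhatLE {m : ℕ} : (Fin m → ℕ) → (Fin m → ℕ) → Prop :=
  Relation.ReflTransGen BruhatStep

/-- Strict Bruhat order. -/
def BruhatLT {m : ℕ} (d d' : Fin m → ℕ) : Prop :=
  BruhatLE d d' ∧ d ≠ d'

/-!
Transport everything to `S` along the injection `v`: there the swapped composition is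
`(d ∘ v) ∘ swap sᵢ sⱼ`, and swapping the values of a monotone function at two incomparable
points `a`, `b` keeps it monotone as soon as everything below `a` is bounded by the value
at `b`, and everything above `b` bounds the value at `a`. For a minimal disorder these two
bounds follow from the minimality conditions for the positions strictly between `i` and
`j`; for a position outside `[i, j]` the consistency of `v` makes it comparable with the
other point too (below `sⱼ`), or rules it out (above `sⱼ` and left of `i`). The Bruhat
inequality is a single swap of a disorder.
-/

theorem Monotone.comp_swap {α β : Type*} [PartialOrder α] [Preorder β] [DecidableEq α]
    {f : α → β} (hf : Monotone f) {a b : α} (hab : ¬a ≤ b) (hba : ¬b ≤ a)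
    (hfba : f b ≤ f a) (hbelow : ∀ t, t < a → f t ≤ f b) (habove : ∀ s, b < s → f a ≤ f s) :
    Monotone (f ∘ Equiv.swap a b) := by
  refine monotone_iff_forall_lt.2 fun x y hxy => ?_
  simp only [Function.comp_apply]
  rcases eq_or_ne x a with rfl | hxa
  · have hyb : y ≠ b := by rintro rfl; exact hab hxy.le
    rw [Equiv.swap_apply_left, Equiv.swap_apply_of_ne_of_ne hxy.ne' hyb]
    exact hfba.trans (hf hxy.le)
  rcases eq_or_ne x b with rfl | hxb
  · have hya : y ≠ a := by rintro rfl; exact hba hxy.le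
    rw [Equiv.swap_apply_right, Equiv.swap_apply_of_ne_of_ne hya hxy.ne']
    exact habove y hxy
  rw [Equiv.swap_apply_of_ne_of_ne hxa hxb]
  rcases eq_or_ne y a with rfl | hya
  · rw [Equiv.swap_apply_left]
    exact hbelow x hxy
  rcases eq_or_ne y b with rfl | hyb
  · rw [Equiv.swap_apply_right]
    exact (hf hxy.le).trans hfba
  · rw [Equiv.swap_apply_of_ne_of_ne hya hyb]
    exact hf hxy.le

theorem bruhatLT_comp_swap {m : ℕ} {d : Fin m → ℕ} {i j : Fin m} (hij : i < j)
    (hd : d j < d i) : BruhatLT d (d ∘ Equiv.swap i j) := by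
  refine ⟨.single ⟨i, j, hij, hd, rfl⟩, fun h => hd.ne ?_⟩
  simpa using (congrFun h i).symm

section

variable {S : Type*} [PartialOrder S] {m : ℕ} {A : AntiLin S m} {d : Fin m → ℕ}

theorem SDominant.monotone (hdom : SDominant A d) : Monotone (d ∘ A.v) :=
  monotone_iff_forall_lt.2 fun _ _ h => hdom.2 _ _ h

theorem SDominant.comp_swap [DecidableEq S] (hdom : SDominant A d) {a b : S}
    (hmono : Monotone (d ∘ A.v ∘ Equiv.swap a b)) :
    SDominant A (d ∘ Equiv.swap (A.v a) (A.v b)) := by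
  refine ⟨fun l hl => ?_, fun s t hts => ?_⟩
  · rw [Function.comp_apply, Equiv.swap_apply_of_ne_of_ne (hl a).symm (hl b).symm]
    exact hdom.1 l hl
  · simp only [Function.comp_apply, A.inj.swap_apply]
    exact hmono hts.le

theorem MinDisorder.le_right_of_lt_left {i j : Fin m} (hdom : SDominant A d)
    (hdis : MinDisorder A d i j) {si t : S} (hsi : A.v si = i) (ht : t < si) :
    d (A.v t) ≤ d j := by
  obtain ⟨hij, -, si', sj, hsi', hsj, -, hsjsi, hmin⟩ := hdis
  obtain rfl : si' = si := A.inj (hsi'.trans hsi.symm)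
  have hit : i < A.v t := hsi ▸ A.anti ht
  rcases lt_trichotomy (A.v t) j with htj | htj | htj
  · exact (hmin _ t rfl hit htj).1 ht
  · exact absurd (A.inj (htj.trans hsj.symm) ▸ ht.le) hsjsi
  · have ht_sj : t < sj := A.cons (hsi' ▸ hsj ▸ hij) (hsj ▸ htj) ht
    exact hsj ▸ hdom.2 _ _ ht_sj

theorem MinDisorder.left_le_of_right_lt {i j : Fin m} (hdis : MinDisorder A d i j)
    {sj s : S} (hsj : A.v sj = j) (hs : sj < s) : d i ≤ d (A.v s) := by
  obtain ⟨hij, -, si, sj', hsi, hsj', -, hsjsi, hmin⟩ := hdis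
  obtain rfl : sj' = sj := A.inj (hsj'.trans hsj.symm)
  have hsj_lt : A.v s < j := hsj' ▸ A.anti hs
  rcases lt_trichotomy (A.v s) i with hs_i | hs_i | hs_i
  · exact absurd (A.cons (hsi ▸ hs_i) (hsi ▸ hsj' ▸ hij) hs).le hsjsi
  · exact absurd (A.inj (hs_i.trans hsi.symm) ▸ hs.le) hsjsi
  · exact (hmin _ s rfl hs_i hsj_lt).2.1 hs

end

theorem stmt_9_general {S : Type*} [PartialOrder S] {m : ℕ} (A : AntiLin S m)
    (d : Fin m → ℕ) (i j : Fin m)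
    (hdom : SDominant A d) (hdis : MinDisorder A d i j) :
    SDominant A (d ∘ Equiv.swap i j) ∧ BruhatLT d (d ∘ Equiv.swap i j) := by
  classical
  obtain ⟨hij, hdji, si, sj, rfl, rfl, hsisj, hsjsi, -⟩ := id hdis
  have hmono : Monotone (d ∘ A.v ∘ Equiv.swap si sj) :=
    hdom.monotone.comp_swap hsisj hsjsi hdji.le
      (fun _ => hdis.le_right_of_lt_left hdom rfl) (fun _ => hdis.left_le_of_right_lt rfl)
  exact ⟨hdom.comp_swap hmono, bruhatLT_comp_swap hij hdji⟩

/-- If `(i, j)` is a minimal `S`-disorder for an `S`-dominant composition `d`, then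
the composition obtained by swapping the entries at `i` and `j` is again
`S`-dominant, and `d` is strictly smaller than it in the Bruhat order. -/
theorem stmt_9 {S : Type*} [PartialOrder S] [Finite S] {m : ℕ} (A : AntiLin S m)
    (d : Fin m → ℕ) (i j : Fin m)
    (hdom : SDominant A d) (hdis : MinDisorder A d i j) :
    SDominant A (d ∘ Equiv.swap i j) ∧ BruhatLT d (d ∘ Equiv.swap i j) :=
  stmt_9_general A d i j hdom hdis
end

section
/- Let (S, v) be an arborescent poset with consistent anti-linearization and let λ be a strictly decreasing partition (regular λ). If a, b are S-dominant compositions in the orbit S_m·λ with a strictly less than b in Bruhat order, then there exists a minimal S-disorder (i,j) for a such that a < (ij)·a ≤ b in Bruhat order. Consequently, the restriction of the Bruhat order to S-dominant compositions is generated by minimal-disorder transpositions. -/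
/-!
Going up one Bruhat step never increases, for a prefix `[0, k)` and a level `r`, the number of
entries `≥ r` in that prefix; so `a ≤ b` makes `a` dominate `b` in this sense, and `b` is a
rearrangement of `a`. Given a dominant `a` dominating `b`, take the first position `i` where they
differ: then `b i < a i`, and there is a first later position `j` with `b i ≤ a j < a i`. If
`v⁻¹ j` lies below `v⁻¹ i`, consistency of `v` reproduces the same situation at `j`; otherwise
`(i, j)` is a minimal `S`-disorder, and swapping it keeps `a` dominant and dominating `b`. The swap
lowers the weight `∑ (m - l) * a l`, so iterating reaches `b` through minimal-disorder swaps.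
-/

open Finset Function

variable {m : ℕ}

def countAtLeast (d : Fin m → ℕ) (lo hi r : ℕ) : ℕ :=
  #{l : Fin m | lo ≤ l.val ∧ l.val < hi ∧ r ≤ d l}

lemma countAtLeast_congr {d d' : Fin m → ℕ} {lo hi r r' : ℕ}
    (h : ∀ l : Fin m, lo ≤ l.val → l.val < hi → (r ≤ d l ↔ r' ≤ d' l)) :
    countAtLeast d lo hi r = countAtLeast d' lo hi r' := by
  unfold countAtLeast
  congr 1
  exact filter_congr fun l _ => ⟨fun ⟨h₁, h₂, h₃⟩ => ⟨h₁, h₂, (h l h₁ h₂).1 h₃⟩,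
    fun ⟨h₁, h₂, h₃⟩ => ⟨h₁, h₂, (h l h₁ h₂).2 h₃⟩⟩

lemma countAtLeast_anti (d : Fin m → ℕ) (lo hi : ℕ) {r r' : ℕ} (h : r ≤ r') :
    countAtLeast d lo hi r' ≤ countAtLeast d lo hi r :=
  card_le_card fun l => by
    simp only [mem_filter, mem_univ, true_and]
    exact fun ⟨h₁, h₂, h₃⟩ => ⟨h₁, h₂, h.trans h₃⟩

lemma countAtLeast_add (d : Fin m → ℕ) {lo mid hi : ℕ} (h₁ : lo ≤ mid) (h₂ : mid ≤ hi) (r : ℕ) :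
    countAtLeast d lo mid r + countAtLeast d mid hi r = countAtLeast d lo hi r := by
  simp only [countAtLeast, card_filter, ← sum_add_distrib]
  exact sum_congr rfl fun l _ => by split_ifs <;> omega

lemma countAtLeast_single (d : Fin m → ℕ) (i : Fin m) (r : ℕ) :
    countAtLeast d i (i + 1) r = if r ≤ d i then 1 else 0 := by
  have : ∀ l : Fin m, (i.val ≤ l.val ∧ l.val < i + 1 ∧ r ≤ d l) ↔ (l = i ∧ r ≤ d i) := by
    intro l
    constructor
    · rintro ⟨h₁, h₂, h₃⟩
      obtain rfl : l = i := Fin.ext (by omega)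
      exact ⟨rfl, h₃⟩
    · rintro ⟨rfl, h⟩
      exact ⟨le_rfl, Nat.lt_succ_self _, h⟩
  simp only [countAtLeast, this, filter_and, filter_eq', mem_univ, if_true]
  split_ifs <;> simp [*]

lemma countAtLeast_split (d : Fin m → ℕ) {lo hi : ℕ} {i : Fin m} (h₁ : lo ≤ i) (h₂ : i.val < hi)
    (r : ℕ) : countAtLeast d lo hi r =
      countAtLeast d lo i r + (if r ≤ d i then 1 else 0) + countAtLeast d (i + 1) hi r := by
  rw [← countAtLeast_single, countAtLeast_add d h₁ (Nat.le_succ _),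
    countAtLeast_add d (Nat.le_succ_of_le h₁) h₂]

lemma countAtLeast_comp_perm (d : Fin m → ℕ) (σ : Equiv.Perm (Fin m)) {lo hi : ℕ}
    (hσ : ∀ l : Fin m, (lo ≤ (σ l).val ∧ (σ l).val < hi) ↔ (lo ≤ l.val ∧ l.val < hi)) (r : ℕ) :
    countAtLeast (d ∘ σ) lo hi r = countAtLeast d lo hi r :=
  card_equiv σ fun l => by simp only [mem_filter, mem_univ, true_and, comp_apply, ← and_assoc, hσ]

lemma countAtLeast_comp_swap_eq {d : Fin m → ℕ} {i j : Fin m} (hij : i < j) {k : ℕ}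
    (hk : k ≤ i ∨ j < k) (r : ℕ) :
    countAtLeast (d ∘ Equiv.swap i j) 0 k r = countAtLeast d 0 k r := by
  refine countAtLeast_comp_perm d _ (fun l => ?_) r
  rcases eq_or_ne l i with rfl | hli
  · simp only [Equiv.swap_apply_left, zero_le, true_and]
    omega
  rcases eq_or_ne l j with rfl | hlj
  · simp only [Equiv.swap_apply_right, zero_le, true_and]
    omega
  rw [Equiv.swap_apply_of_ne_of_ne hli hlj]

lemma countAtLeast_comp_swap_add {d : Fin m → ℕ} {i j : Fin m} {k : ℕ} (hik : i.val < k)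
    (hkj : k ≤ j) (r : ℕ) :
    countAtLeast (d ∘ Equiv.swap i j) 0 k r + (if r ≤ d i then 1 else 0) =
      countAtLeast d 0 k r + (if r ≤ d j then 1 else 0) := by
  have hagree : ∀ l : Fin m, l ≠ i → l.val < k → (d ∘ Equiv.swap i j) l = d l := fun l hli hlk =>
    congrArg d (Equiv.swap_apply_of_ne_of_ne hli (by rintro rfl; omega))
  rw [countAtLeast_split _ (Nat.zero_le _) hik, countAtLeast_split d (Nat.zero_le _) hik,
    countAtLeast_congr (d' := d) (lo := 0) (hi := i) (r := r)
      (fun l _ hl => by rw [hagree l (by rintro rfl; omega) (by omega)]),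
    countAtLeast_congr (d := d ∘ Equiv.swap i j) (d' := d) (lo := i + 1) (hi := k) (r := r)
      (fun l hl _ => by rw [hagree l (by rintro rfl; omega) (by omega)])]
  simp only [comp_apply, Equiv.swap_apply_left]
  ring

def Dominates (a b : Fin m → ℕ) : Prop :=
  ∀ k r, countAtLeast b 0 k r ≤ countAtLeast a 0 k r

lemma Dominates.trans {a b c : Fin m → ℕ} (hab : Dominates a b) (hbc : Dominates b c) :
    Dominates a c :=
  fun k r => (hbc k r).trans (hab k r)

lemma BruhatStep.dominates {d d' : Fin m → ℕ} (h : BruhatStep d d') : Dominates d d' := by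
  obtain ⟨i, j, hij, hlt, rfl⟩ := h
  intro k r
  by_cases hk : i.val < k ∧ k ≤ j
  · have := countAtLeast_comp_swap_add (d := d) hk.1 hk.2 r
    have : (if r ≤ d j then 1 else 0) ≤ if r ≤ d i then 1 else 0 := by split_ifs <;> omega
    omega
  · exact (countAtLeast_comp_swap_eq hij (by omega) r).le

lemma BruhatLE.dominates_and_exists_perm {a b : Fin m → ℕ} (h : BruhatLE a b) :
    Dominates a b ∧ ∃ σ : Equiv.Perm (Fin m), b = a ∘ σ := by
  induction h with
  | refl => exact ⟨fun _ _ => le_rfl, Equiv.refl _, rfl⟩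
  | tail _ hstep ih =>
    obtain ⟨hdom, σ, rfl⟩ := ih
    obtain ⟨i, j, hij, hlt, rfl⟩ := hstep
    exact ⟨hdom.trans (BruhatStep.dominates ⟨i, j, hij, hlt, rfl⟩), (Equiv.swap i j).trans σ, rfl⟩

lemma countAtLeast_total_comp_perm (d : Fin m → ℕ) (σ : Equiv.Perm (Fin m)) (r : ℕ) :
    countAtLeast (d ∘ σ) 0 m r = countAtLeast d 0 m r :=
  countAtLeast_comp_perm d σ (fun l => by simp) r

def weight (d : Fin m → ℕ) : ℕ :=
  ∑ l : Fin m, (m - l.val) * d l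

lemma weight_comp_swap_lt {d : Fin m → ℕ} {i j : Fin m} (hij : i < j) (hlt : d j < d i) :
    weight (d ∘ Equiv.swap i j) < weight d := by
  have hj : j ∈ univ.erase i := mem_erase.mpr ⟨hij.ne', mem_univ j⟩
  have hsplit : ∀ d : Fin m → ℕ, weight d = (m - i.val) * d i + ((m - j.val) * d j +
      ∑ l ∈ (univ.erase i).erase j, (m - l.val) * d l) := fun d => by
    rw [weight, ← add_sum_erase _ _ (mem_univ i), ← add_sum_erase _ _ hj]
  have hrest : ∑ l ∈ (univ.erase i).erase j, (m - l.val) * (d ∘ Equiv.swap i j) l =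
      ∑ l ∈ (univ.erase i).erase j, (m - l.val) * d l := by
    refine sum_congr rfl fun l hl => ?_
    obtain ⟨hlj, hl⟩ := mem_erase.mp hl
    rw [comp_apply, Equiv.swap_apply_of_ne_of_ne (mem_erase.mp hl).1 hlj]
  rw [hsplit, hsplit d, hrest]
  simp only [comp_apply, Equiv.swap_apply_left, Equiv.swap_apply_right]
  have hw : m - j.val < m - i.val := by have := j.isLt; omega
  nlinarith

section AntiLin

variable {S : Type*} [PartialOrder S] {A : AntiLin S m}

lemma AntiLin.not_le_of_v_lt (A : AntiLin S m) {s t : S} (h : A.v s < A.v t) : ¬ s ≤ t := by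
  intro hst
  rcases hst.eq_or_lt with rfl | hlt
  · exact h.false
  · exact (A.anti hlt).asymm h

lemma SDominant.eq_zero {d : Fin m → ℕ} (hd : SDominant A d) {l : Fin m} (hl : ∀ s, A.v s ≠ l) :
    d l = 0 :=
  hd.1 l hl

lemma SDominant.le {d : Fin m → ℕ} (hd : SDominant A d) {s t : S} (h : t < s) :
    d (A.v t) ≤ d (A.v s) :=
  hd.2 s t h

lemma MinDisorder.bruhatStep {d : Fin m → ℕ} {i j : Fin m} (h : MinDisorder A d i j) :
    BruhatStep d (d ∘ Equiv.swap i j) :=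
  ⟨i, j, h.1, h.2.1, rfl⟩

lemma SDominant.comp_swap_s10 {a : Fin m → ℕ} (ha : SDominant A a) {i j : Fin m}
    (hd : MinDisorder A a i j) : SDominant A (a ∘ Equiv.swap i j) := by
  obtain ⟨hij, hlt, si, sj, rfl, rfl, hnij, hnji, hmid⟩ := hd
  have below_si : ∀ t, t < si → a (A.v t) ≤ a (A.v sj) := fun t ht => by
    rcases lt_trichotomy (A.v t) (A.v sj) with h | h | h
    · exact (hmid _ t rfl (A.anti ht) h).1 ht
    · exact (hnji (A.inj h ▸ ht.le)).elim
    · exact ha.le (A.cons hij h ht)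
  have above_sj : ∀ s, sj < s → a (A.v si) ≤ a (A.v s) := fun s hs => by
    rcases lt_trichotomy (A.v s) (A.v si) with h | h | h
    · exact (hnji (A.cons h hij hs).le).elim
    · exact (hnji (A.inj h ▸ hs.le)).elim
    · exact (hmid _ s rfl h (A.anti hs)).2.1 hs
  refine ⟨fun l hl => ?_, fun s t hts => ?_⟩
  · rw [comp_apply, Equiv.swap_apply_of_ne_of_ne (fun h => hl si h.symm) (fun h => hl sj h.symm)]
    exact ha.eq_zero hl
  have swap_si : (a ∘ Equiv.swap (A.v si) (A.v sj)) (A.v si) = a (A.v sj) := by simp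
  have swap_sj : (a ∘ Equiv.swap (A.v si) (A.v sj)) (A.v sj) = a (A.v si) := by simp
  have swap_other : ∀ u, u ≠ si → u ≠ sj → (a ∘ Equiv.swap (A.v si) (A.v sj)) (A.v u) = a (A.v u) :=
    fun u h₁ h₂ => congrArg a (Equiv.swap_apply_of_ne_of_ne (A.inj.ne h₁) (A.inj.ne h₂))
  rcases eq_or_ne s si with rfl | hs₁
  · rw [swap_si, swap_other t hts.ne (by rintro rfl; exact hnji hts.le)]
    exact below_si t hts
  rcases eq_or_ne s sj with rfl | hs₂
  · rw [swap_sj, swap_other t (by rintro rfl; exact hnij hts.le) hts.ne]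
    exact (ha.le hts).trans hlt.le
  rw [swap_other s hs₁ hs₂]
  rcases eq_or_ne t si with rfl | ht₁
  · rw [swap_si]
    exact hlt.le.trans (ha.le hts)
  rcases eq_or_ne t sj with rfl | ht₂
  · rw [swap_sj]
    exact above_sj s hts
  rw [swap_other t ht₁ ht₂]
  exact ha.le hts

lemma exists_gt_of_dominates {a b : Fin m → ℕ} (hdom : Dominates a b)
    (htot : ∀ r, countAtLeast a 0 m r = countAtLeast b 0 m r) {i : Fin m} (hlt : b i < a i)
    (hpre : countAtLeast a 0 i (b i) = countAtLeast b 0 i (b i)) :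
    ∃ l, i < l ∧ b i ≤ a l ∧ a l < a i := by
  by_contra! hC
  have hsuffix : countAtLeast a (i + 1) m (b i) = countAtLeast a (i + 1) m (a i) :=
    countAtLeast_congr fun l hl _ => ⟨hC l (Fin.lt_def.mpr hl), hlt.le.trans⟩
  have hlow := htot (b i)
  have hhigh := htot (a i)
  rw [countAtLeast_split a (Nat.zero_le i) i.isLt, countAtLeast_split b (Nat.zero_le i) i.isLt]
    at hlow hhigh
  rw [if_pos hlt.le, if_pos le_rfl] at hlow
  rw [if_pos le_rfl, if_neg (not_le.mpr hlt)] at hhigh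
  have := hdom i (a i)
  have := countAtLeast_anti b (i + 1) m hlt.le
  omega

lemma Dominates.comp_swap_s10 {a b : Fin m → ℕ} (hdom : Dominates a b) {i j : Fin m} (hij : i < j)
    (hpre : countAtLeast a 0 i (b i) = countAtLeast b 0 i (b i))
    (hbj : b i ≤ a j) (hji : a j < a i)
    (hgap : ∀ l : Fin m, i < l → l < j → b i ≤ a l → a i ≤ a l) :
    Dominates (a ∘ Equiv.swap i j) b := by
  intro k r
  by_cases hk : i.val < k ∧ k ≤ j
  swap
  · rw [countAtLeast_comp_swap_eq hij (by omega) r]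
    exact hdom k r
  have hmid := countAtLeast_comp_swap_add (d := a) hk.1 hk.2 r
  by_cases hr : a j < r ∧ r ≤ a i
  swap
  · have : (if r ≤ a i then 1 else 0) = if r ≤ a j then 1 else 0 := by split_ifs <;> omega
    have := hdom k r
    omega
  rw [if_pos hr.2, if_neg (by omega)] at hmid
  -- between `i` and `k` the entries of `a` avoid `[b i, a i)`, so counting them at level `r`
  -- or at level `b i` is the same; at level `b i` dominance bounds the entries of `b` there
  have hsuffix : countAtLeast a (i + 1) k r = countAtLeast a (i + 1) k (b i) :=
    countAtLeast_congr fun l hl hlk =>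
      ⟨fun h => by omega,
        fun h => hr.2.trans (hgap l (Fin.lt_def.mpr hl) (Fin.lt_def.mpr (by omega)) h)⟩
  have hsa := countAtLeast_split a (Nat.zero_le i) hk.1 r
  have hsb := countAtLeast_split b (Nat.zero_le i) hk.1 r
  have hsa' := countAtLeast_split a (Nat.zero_le i) hk.1 (b i)
  have hsb' := countAtLeast_split b (Nat.zero_le i) hk.1 (b i)
  rw [if_pos hr.2] at hsa
  rw [if_neg (by omega)] at hsb
  rw [if_pos (by omega)] at hsa'
  rw [if_pos le_rfl] at hsb'
  have := hdom i r
  have := hdom k (b i)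
  have := countAtLeast_anti b (i + 1) k (hbj.trans hr.1.le)
  omega

lemma minDisorder_of_gap {a : Fin m → ℕ} (hreg : Injective a) (ha : SDominant A a) {si sj : S}
    (hij : A.v si < A.v sj) (hji : a (A.v sj) < a (A.v si)) (hinc : ¬ sj ≤ si)
    (hgap : ∀ l, A.v si < l → l < A.v sj → a l < a (A.v sj) ∨ a (A.v si) ≤ a l) :
    MinDisorder A a (A.v si) (A.v sj) := by
  refine ⟨hij, hji, si, sj, rfl, rfl, A.not_le_of_v_lt hij, hinc, ?_⟩
  rintro _ sl rfl hil hlj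
  have hne_i : a (A.v sl) ≠ a (A.v si) := hreg.ne hil.ne'
  rcases hgap _ hil hlj with h | h
  · exact ⟨fun _ => h.le, fun hs => absurd (ha.le hs) (not_le.mpr h),
      fun _ hmem => absurd hmem.1 (not_le.mpr h)⟩
  · exact ⟨fun hs => absurd (ha.le hs) (by omega), fun _ => by omega,
      fun _ hmem => by omega⟩

lemma lt_and_prefix_eq_of_lt {a b : Fin m → ℕ} (hbreg : Injective b) (ha : SDominant A a)
    (hb : SDominant A b) {si sj : S} (hij : A.v si < A.v sj) (hlt : sj < si)
    (hbi : b (A.v si) < a (A.v si)) (hbj : b (A.v si) ≤ a (A.v sj))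
    (hpre : ∀ r ≤ b (A.v si), countAtLeast a 0 (A.v si) r = countAtLeast b 0 (A.v si) r) :
    b (A.v sj) < a (A.v sj) ∧
      ∀ r ≤ b (A.v sj), countAtLeast a 0 (A.v sj) r = countAtLeast b 0 (A.v sj) r := by
  have hbji : b (A.v sj) < b (A.v si) := (hb.le hlt).lt_of_ne (hbreg.ne (A.inj.ne hlt.ne))
  refine ⟨hbji.trans_le hbj, fun r hr => ?_⟩
  rw [← countAtLeast_add a (Nat.zero_le _) hij.le, ← countAtLeast_add b (Nat.zero_le _) hij.le,
    hpre r (hr.trans hbji.le)]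
  congr 1
  -- every `sl` placed strictly between `si` and `sj` lies above `sj`, by consistency
  refine countAtLeast_congr fun l hil hlj => ?_
  rcases (Fin.le_def.mpr hil).eq_or_lt with rfl | hil
  · exact iff_of_true (by omega) (by omega)
  by_cases hl : ∃ sl, A.v sl = l
  · obtain ⟨sl, rfl⟩ := hl
    have hsl : sj < sl := A.cons hil (Fin.lt_def.mpr hlj) hlt
    exact iff_of_true (by have := ha.le hsl; omega) (hr.trans (hb.le hsl))
  · rw [ha.eq_zero (not_exists.mp hl), hb.eq_zero (not_exists.mp hl)]

theorem exists_minDisorder_dominates_comp_swap {a b : Fin m → ℕ} (hreg : Injective a)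
    (hbreg : Injective b) (ha : SDominant A a) (hb : SDominant A b) (hdom : Dominates a b)
    (htot : ∀ r, countAtLeast a 0 m r = countAtLeast b 0 m r) {si : S}
    (hlt : b (A.v si) < a (A.v si))
    (hpre : ∀ r ≤ b (A.v si), countAtLeast a 0 (A.v si) r = countAtLeast b 0 (A.v si) r) :
    ∃ p q, MinDisorder A a p q ∧ Dominates (a ∘ Equiv.swap p q) b := by
  induction hi : A.v si using WellFoundedGT.induction generalizing si with
  | _ i ih =>
  subst hi
  obtain ⟨j, ⟨hij, hbj, hji⟩, hfirst⟩ :=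
    wellFounded_lt.has_min {l | A.v si < l ∧ b (A.v si) ≤ a l ∧ a l < a (A.v si)}
      (exists_gt_of_dominates hdom htot hlt (hpre _ le_rfl))
  have hgap : ∀ l, A.v si < l → l < j → b (A.v si) ≤ a l → a (A.v si) ≤ a l :=
    fun l h₁ h₂ h₃ => not_lt.mp fun h => hfirst l ⟨h₁, h₃, h⟩ h₂
  obtain ⟨sj, rfl⟩ : ∃ sj, A.v sj = j := by
    by_contra! hj
    have := ha.eq_zero hj
    exact hij.ne (hbreg (by rw [hb.eq_zero hj]; omega))
  by_cases hcomp : sj ≤ si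
  · have hlt' : sj < si := hcomp.lt_of_ne (by rintro rfl; exact hij.false)
    obtain ⟨hbj', hpre'⟩ := lt_and_prefix_eq_of_lt hbreg ha hb hij hlt' hlt hbj hpre
    exact ih _ hij hbj' hpre' rfl
  · refine ⟨_, _, minDisorder_of_gap hreg ha hij hji hcomp fun l h₁ h₂ => ?_,
      hdom.comp_swap_s10 hij (hpre _ le_rfl) hbj hji hgap⟩
    exact (lt_or_ge (a l) (b (A.v si))).imp (·.trans_le hbj) (hgap l h₁ h₂)

def MinDisorderStep (A : AntiLin S m) (c c' : Fin m → ℕ) : Prop :=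
  SDominant A c ∧ SDominant A c' ∧ ∃ i j : Fin m, MinDisorder A c i j ∧ c' = c ∘ Equiv.swap i j

lemma MinDisorderStep.bruhatStep {c c' : Fin m → ℕ} (h : MinDisorderStep A c c') :
    BruhatStep c c' := by
  obtain ⟨-, -, i, j, hij, rfl⟩ := h
  exact hij.bruhatStep

theorem reflTransGen_minDisorderStep {a b : Fin m → ℕ} (hreg : Injective a)
    (ha : SDominant A a) (hb : SDominant A b) (hdom : Dominates a b)
    (hperm : ∃ σ : Equiv.Perm (Fin m), b = a ∘ σ) :
    Relation.ReflTransGen (MinDisorderStep A) a b := by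
  induction hw : weight a using Nat.strong_induction_on generalizing a with
  | _ w ih =>
  obtain ⟨σ, rfl⟩ := hperm
  by_cases hab : a = a ∘ σ
  · rw [← hab]
  obtain ⟨i, hi, hfirst⟩ := wellFounded_lt.has_min {l | a l ≠ (a ∘ σ) l} (Function.ne_iff.mp hab)
  have hpre : ∀ r, countAtLeast a 0 i r = countAtLeast (a ∘ σ) 0 i r := fun r =>
    countAtLeast_congr fun l _ hl => by
      rw [not_not.mp fun h => hfirst l h (Fin.lt_def.mpr hl)]
  have hlt : (a ∘ σ) i < a i := by
    have := hdom (i + 1) ((a ∘ σ) i)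
    rw [← countAtLeast_add a (Nat.zero_le i) (Nat.le_add_right i 1),
      ← countAtLeast_add (a ∘ σ) (Nat.zero_le i) (Nat.le_add_right i 1), countAtLeast_single,
      countAtLeast_single, hpre, if_pos le_rfl] at this
    split_ifs at this with h
    · exact h.lt_of_ne' hi
    · omega
  obtain ⟨si, rfl⟩ : ∃ si, A.v si = i := by
    by_contra! hnot
    rw [ha.eq_zero hnot] at hlt
    exact Nat.not_lt_zero _ hlt
  obtain ⟨p, q, hpq, hdom'⟩ := exists_minDisorder_dominates_comp_swap hreg
    (hreg.comp σ.injective) ha hb hdom (fun r => (countAtLeast_total_comp_perm a σ r).symm)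
    hlt fun r _ => hpre r
  refine .head ⟨ha, ha.comp_swap_s10 hpq, p, q, hpq, rfl⟩ (ih _ ?_ (hreg.comp (Equiv.injective _))
    (ha.comp_swap_s10 hpq) hdom' ⟨σ.trans (Equiv.swap p q), ?_⟩ rfl)
  · exact hw ▸ weight_comp_swap_lt hpq.1 hpq.2.1
  · ext l
    simp

end AntiLin

theorem stmt_10_general {S : Type*} [PartialOrder S] {m : ℕ} (A : AntiLin S m)
    (a b : Fin m → ℕ) (hreg : Function.Injective a)
    (ha : SDominant A a) (hb : SDominant A b) (hab : BruhatLT a b) :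
    (∃ i j : Fin m, MinDisorder A a i j ∧
        BruhatLT a (a ∘ Equiv.swap i j) ∧ BruhatLE (a ∘ Equiv.swap i j) b) ∧
    Relation.ReflTransGen
      (fun c c' : Fin m → ℕ => SDominant A c ∧ SDominant A c' ∧
        ∃ i j : Fin m, MinDisorder A c i j ∧ c' = c ∘ Equiv.swap i j) a b := by
  obtain ⟨hle, hne⟩ := hab
  obtain ⟨hdom, hperm⟩ := hle.dominates_and_exists_perm
  have hchain := reflTransGen_minDisorderStep hreg ha hb hdom hperm
  obtain ⟨_, ⟨-, -, i, j, hij, rfl⟩, htail⟩ := hchain.cases_head.resolve_left hne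
  have hne' : a ≠ a ∘ Equiv.swap i j := fun h =>
    hij.1.ne (hreg (by simpa using congrFun h i))
  refine ⟨⟨i, j, hij, ⟨.single hij.bruhatStep, hne'⟩, ?_⟩, hchain⟩
  exact Relation.ReflTransGen.mono (fun _ _ h => h.bruhatStep) _ _ htail

/-- For regular `λ` (the composition `a` has pairwise distinct entries): if `a` and
`b` are `S`-dominant and `a` is strictly Bruhat-smaller than `b`, then some minimal
`S`-disorder transposition applied to `a` stays `≤ b`; consequently the Bruhat order
restricted to `S`-dominant compositions is generated by minimal-disorder
transpositions. -/
theorem stmt_10 {S : Type*} [PartialOrder S] [Finite S] {m : ℕ} (A : AntiLin S m)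
    (a b : Fin m → ℕ) (hreg : Function.Injective a)
    (ha : SDominant A a) (hb : SDominant A b) (hab : BruhatLT a b) :
    (∃ i j : Fin m, MinDisorder A a i j ∧
        BruhatLT a (a ∘ Equiv.swap i j) ∧ BruhatLE (a ∘ Equiv.swap i j) b) ∧
    Relation.ReflTransGen
      (fun c c' : Fin m → ℕ => SDominant A c ∧ SDominant A c' ∧
        ∃ i j : Fin m, MinDisorder A c i j ∧ c' = c ∘ Equiv.swap i j) a b :=
  stmt_10_general A a b hreg ha hb hab
end

section
/- Let λ be a strictly decreasing partition and (S, v) an arborescent poset with consistent anti-linearization. Then the poset D_S of S-dominant compositions is subthin: every closed interval [a, b] in D_S with rank(b) − rank(a) = 2 has open interval (a, b) containing at most two elements. -/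
/-- The rank of an `S`-dominant composition: the number of pairs `(s, t)` with
`s` not `⪰ t`, `v s < v t` and `d (v s) < d (v t)`. -/
noncomputable def domRank {S : Type*} [PartialOrder S] {m : ℕ} (A : AntiLin S m)
    (d : Fin m → ℕ) : ℕ :=
  Set.ncard {p : S × S | ¬ p.2 ≤ p.1 ∧ A.v p.1 < A.v p.2 ∧ d (A.v p.1) < d (A.v p.2)}



def ascSet {m : ℕ} (d : Fin m → ℕ) : Set (Fin m × Fin m) :=
  {p | p.1 < p.2 ∧ d p.1 < d p.2}

noncomputable def asc {m : ℕ} (d : Fin m → ℕ) : ℕ := (ascSet d).ncard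

def phi {m : ℕ} (i j : Fin m) (p : Fin m × Fin m) : Fin m × Fin m :=
  if p.1 = i ∧ j < p.2 then (j, p.2)
  else if p.1 = j then (i, p.2)
  else if p.2 = i then (p.1, j)
  else if p.2 = j ∧ p.1 < i then (p.1, i)
  else p

section phi
variable {m : ℕ} {i j : Fin m}

lemma phiA {l : Fin m} (hl : j < l) : phi i j (i, l) = (j, l) := by
  unfold phi; rw [if_pos ⟨rfl, hl⟩]

lemma phiB (hij : i < j) {l : Fin m} (hl : j < l) : phi i j (j, l) = (i, l) := by
  unfold phi
  rw [if_neg (by rintro ⟨h, -⟩; exact hij.ne' h), if_pos rfl]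

lemma phiC (hij : i < j) {k : Fin m} (hk : k < i) : phi i j (k, i) = (k, j) := by
  unfold phi
  rw [if_neg (by rintro ⟨h, -⟩; exact hk.ne h), if_neg (fun h => (hk.trans hij).ne h),
    if_pos rfl]

lemma phiD (hij : i < j) {k : Fin m} (hk : k < i) : phi i j (k, j) = (k, i) := by
  unfold phi
  rw [if_neg (by rintro ⟨h, -⟩; exact hk.ne h), if_neg (fun h => (hk.trans hij).ne h),
    if_neg (fun h => hij.ne' h), if_pos ⟨rfl, hk⟩]

lemma phiE1 (hij : i < j) {l : Fin m} (hl : i < l) (hl2 : l ≤ j) :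
    phi i j (i, l) = (i, l) := by
  unfold phi
  rw [if_neg (by rintro ⟨-, h⟩; exact absurd h (not_lt.mpr hl2)),
    if_neg (fun h => hij.ne h), if_neg (fun h => hl.ne' h),
    if_neg (by rintro ⟨-, h⟩; exact lt_irrefl _ h)]

lemma phiE2 (hij : i < j) {k : Fin m} (hk : i < k) (hk2 : k < j) :
    phi i j (k, j) = (k, j) := by
  unfold phi
  rw [if_neg (by rintro ⟨h, -⟩; exact hk.ne' h), if_neg (fun h => hk2.ne h),
    if_neg (fun h => hij.ne' h), if_neg (by rintro ⟨-, h⟩; exact absurd h (not_lt.mpr hk.le))]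

lemma phiE3 {k l : Fin m} (h1 : k ≠ i) (h2 : k ≠ j) (h3 : l ≠ i) (h4 : l ≠ j) :
    phi i j (k, l) = (k, l) := by
  unfold phi
  rw [if_neg (by rintro ⟨h, -⟩; exact h1 h), if_neg h2, if_neg h3,
    if_neg (by rintro ⟨h, -⟩; exact h4 h)]

lemma phi_invol (hij : i < j) {p : Fin m × Fin m} (hp : p.1 < p.2) :
    phi i j (phi i j p) = p := by
  obtain ⟨k, l⟩ := p
  simp only at hp
  by_cases hk : k = i
  · subst hk
    rcases lt_or_ge j l with h | h
    · rw [phiA h, phiB hij h]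
    · rw [phiE1 hij hp h, phiE1 hij hp h]
  · by_cases hkj : k = j
    · subst hkj
      rw [phiB hij hp, phiA hp]
    · by_cases hl : l = i
      · subst hl
        rw [phiC hij hp, phiD hij hp]
      · by_cases hlj : l = j
        · subst hlj
          rcases lt_or_ge k i with h | h
          · rw [phiD hij h, phiC hij h]
          · rw [phiE2 hij (lt_of_le_of_ne h (Ne.symm hk)) hp,
                phiE2 hij (lt_of_le_of_ne h (Ne.symm hk)) hp]
        · rw [phiE3 hk hkj hl hlj, phiE3 hk hkj hl hlj]

lemma phi_mem (hij : i < j) {d : Fin m → ℕ} (hd : d j < d i) {p : Fin m × Fin m}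
    (hp : p ∈ ascSet d) :
    phi i j p ∈ ascSet (d ∘ Equiv.swap i j) ∧ phi i j p ≠ (i, j) := by
  obtain ⟨k, l⟩ := p
  obtain ⟨hp1, hp2⟩ := hp
  simp only at hp1 hp2
  have swl : Equiv.swap i j i = j := Equiv.swap_apply_left i j
  have swr : Equiv.swap i j j = i := Equiv.swap_apply_right i j
  by_cases hk : i = k
  · subst hk
    rcases lt_or_ge j l with h | h
    · rw [phiA h]
      have hl : Equiv.swap i j l = l := Equiv.swap_apply_of_ne_of_ne (hij.trans h).ne' h.ne'
      refine ⟨⟨h, ?_⟩, ?_⟩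
      · simp only [Function.comp_apply, swr, hl]; exact hp2
      · exact fun hc => absurd (congrArg Prod.snd hc) h.ne'
    · have h' : l < j := lt_of_le_of_ne h (by rintro rfl; exact absurd hp2 (not_lt.mpr hd.le))
      rw [phiE1 hij hp1 h]
      have hl : Equiv.swap i j l = l := Equiv.swap_apply_of_ne_of_ne hp1.ne' h'.ne
      refine ⟨⟨hp1, ?_⟩, ?_⟩
      · simp only [Function.comp_apply, swl, hl]; exact hd.trans hp2
      · exact fun hc => absurd (congrArg Prod.snd hc) h'.ne
  · by_cases hkj : j = k
    · subst hkj
      rw [phiB hij hp1]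
      have hl : Equiv.swap i j l = l := Equiv.swap_apply_of_ne_of_ne (hij.trans hp1).ne' hp1.ne'
      refine ⟨⟨hij.trans hp1, ?_⟩, ?_⟩
      · simp only [Function.comp_apply, swl, hl]; exact hp2
      · exact fun hc => absurd (congrArg Prod.snd hc) hp1.ne'
    · by_cases hl : i = l
      · subst hl
        rw [phiC hij hp1]
        have hk' : Equiv.swap i j k = k := Equiv.swap_apply_of_ne_of_ne hp1.ne (hp1.trans hij).ne
        refine ⟨⟨hp1.trans hij, ?_⟩, ?_⟩
        · simp only [Function.comp_apply, swr, hk']; exact hp2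
        · exact fun hc => absurd (congrArg Prod.fst hc) hp1.ne
      · by_cases hlj : j = l
        · subst hlj
          rcases lt_or_ge k i with h | h
          · rw [phiD hij h]
            have hk' : Equiv.swap i j k = k := Equiv.swap_apply_of_ne_of_ne h.ne (fun e => hkj e.symm)
            refine ⟨⟨h, ?_⟩, ?_⟩
            · simp only [Function.comp_apply, swl, hk']; exact hp2
            · exact fun hc => absurd (congrArg Prod.snd hc) hij.ne
          · have h' : i < k := lt_of_le_of_ne h hk
            rw [phiE2 hij h' hp1]
            have hk' : Equiv.swap i j k = k := Equiv.swap_apply_of_ne_of_ne (Ne.symm hk) hp1.ne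
            refine ⟨⟨hp1, ?_⟩, ?_⟩
            · simp only [Function.comp_apply, swr, hk']
              exact hp2.trans hd
            · exact fun hc => absurd (congrArg Prod.fst hc) (Ne.symm hk)
        · rw [phiE3 (Ne.symm hk) (Ne.symm hkj) (Ne.symm hl) (Ne.symm hlj)]
          have hk' : Equiv.swap i j k = k := Equiv.swap_apply_of_ne_of_ne (Ne.symm hk) (Ne.symm hkj)
          have hl' : Equiv.swap i j l = l := Equiv.swap_apply_of_ne_of_ne (Ne.symm hl) (Ne.symm hlj)
          refine ⟨⟨hp1, ?_⟩, ?_⟩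
          · simp only [Function.comp_apply, hk', hl']; exact hp2
          · exact fun hc => absurd (congrArg Prod.fst hc) (Ne.symm hk)

end phi

lemma asc_step {m : ℕ} {d e : Fin m → ℕ} (h : BruhatStep d e) : asc d + 1 ≤ asc e := by
  obtain ⟨i, j, hij, hd, rfl⟩ := h
  have hmem : ∀ p ∈ ascSet d,
      phi i j p ∈ ascSet (d ∘ Equiv.swap i j) ∧ phi i j p ≠ (i, j) :=
    fun p hp => phi_mem hij hd hp
  have hsub : insert (i, j) (phi i j '' ascSet d) ⊆ ascSet (d ∘ Equiv.swap i j) := by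
    rintro p (rfl | ⟨q, hq, rfl⟩)
    · refine ⟨hij, ?_⟩
      simp only [Function.comp_apply, Equiv.swap_apply_left, Equiv.swap_apply_right]
      exact hd
    · exact (hmem q hq).1
  have hnot : (i, j) ∉ phi i j '' ascSet d := by
    rintro ⟨q, hq, hc⟩
    exact (hmem q hq).2 hc
  have hinj : Set.InjOn (phi i j) (ascSet d) := by
    intro p hp q hq hpq
    rw [← phi_invol hij hp.1, hpq, phi_invol hij hq.1]
  have h1 : (insert (i, j) (phi i j '' ascSet d)).ncard = (ascSet d).ncard + 1 := by
    rw [Set.ncard_insert_of_notMem hnot (Set.toFinite _), Set.ncard_image_of_injOn hinj]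
  calc asc d + 1 = (insert (i, j) (phi i j '' ascSet d)).ncard := h1.symm
    _ ≤ (ascSet (d ∘ Equiv.swap i j)).ncard := Set.ncard_le_ncard hsub (Set.toFinite _)



lemma asc_le' {m : ℕ} {d e : Fin m → ℕ} (h : BruhatLE d e) : asc d ≤ asc e := by
  induction h with
  | refl => exact le_refl _
  | tail _ h2 ih => exact le_trans ih (le_trans (Nat.le_succ _) (asc_step h2))

lemma asc_lt' {m : ℕ} {d e : Fin m → ℕ} (h : BruhatLT d e) : asc d + 1 ≤ asc e := by
  obtain ⟨hle, hne⟩ := h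
  rcases (Relation.ReflTransGen.cases_head hle) with rfl | ⟨x, hx, hxe⟩
  · exact absurd rfl hne
  · exact le_trans (asc_step hx) (asc_le' hxe)

lemma step_of_middle {m : ℕ} {a b c : Fin m → ℕ} (hasc : asc b = asc a + 2)
    (h1 : BruhatLT a c) (h2 : BruhatLT c b) : BruhatStep a c ∧ BruhatStep c b := by
  have hc1 : asc a + 1 ≤ asc c := asc_lt' h1
  have hc2 : asc c + 1 ≤ asc b := asc_lt' h2
  have hc : asc c = asc a + 1 := by omega
  constructor
  · rcases Relation.ReflTransGen.cases_head h1.1 with rfl | ⟨x, hx, hxc⟩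
    · exact absurd rfl h1.2
    · have h3 : asc a + 1 ≤ asc x := asc_step hx
      have h4 : asc x ≤ asc c := asc_le' hxc
      by_cases hxc' : x = c
      · exact hxc' ▸ hx
      · have := asc_lt' ⟨hxc, hxc'⟩; omega
  · rcases Relation.ReflTransGen.cases_head h2.1 with rfl | ⟨x, hx, hxb⟩
    · exact absurd rfl h2.2
    · have h3 : asc c + 1 ≤ asc x := asc_step hx
      have h4 : asc x ≤ asc b := asc_le' hxb
      by_cases hxb' : x = b
      · exact hxb' ▸ hx
      · have := asc_lt' ⟨hxb, hxb'⟩; omega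

lemma exists_perm_of_le {m : ℕ} {d e : Fin m → ℕ} (h : BruhatLE d e) :
    ∃ σ : Equiv.Perm (Fin m), e = d ∘ σ := by
  induction h with
  | refl => exact ⟨Equiv.refl _, rfl⟩
  | tail _ h2 ih =>
      obtain ⟨σ, rfl⟩ := ih
      obtain ⟨i, j, -, -, rfl⟩ := h2
      exact ⟨(Equiv.swap i j).trans σ, rfl⟩

def DisT {m : ℕ} (a b c : Fin m → ℕ) (i j k l : Fin m) : Prop :=
  i < j ∧ k < l ∧ i ≠ k ∧ i ≠ l ∧ j ≠ k ∧ j ≠ l ∧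
  b i = a j ∧ b j = a i ∧ b k = a l ∧ b l = a k ∧
  c = a ∘ Equiv.swap i j ∧
  (∀ p, p ≠ i → p ≠ j → p ≠ k → p ≠ l → b p = a p)

def CycT {m : ℕ} (a b c : Fin m → ℕ) : Prop :=
  ∃ x y z : Fin m, x < y ∧ y < z ∧ (∀ p, p ≠ x → p ≠ y → p ≠ z → b p = a p) ∧
  ((b x = a y ∧ b y = a z ∧ b z = a x ∧
      ((c = a ∘ Equiv.swap x y ∧ a y < a x ∧ a z < a x)
      ∨ (c = a ∘ Equiv.swap y z ∧ a z < a y ∧ a y < a x)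
      ∨ (c = a ∘ Equiv.swap x z ∧ a z < a x ∧ a y < a z)))
  ∨ (b x = a z ∧ b y = a x ∧ b z = a y ∧
      ((c = a ∘ Equiv.swap x y ∧ a y < a x ∧ a z < a y)
      ∨ (c = a ∘ Equiv.swap y z ∧ a z < a y ∧ a z < a x)
      ∨ (c = a ∘ Equiv.swap x z ∧ a z < a x ∧ a x < a y))))

lemma swap_ne_ne {m : ℕ} {i j p : Fin m} (h1 : p ≠ i) (h2 : p ≠ j) :
    Equiv.swap i j p = p := Equiv.swap_apply_of_ne_of_ne h1 h2

lemma classify {m : ℕ} {a b c : Fin m → ℕ} (hab : a ≠ b)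
    {i j k l : Fin m} (hij : i < j) (h1 : a j < a i) (hkl : k < l)
    (h2 : (a ∘ Equiv.swap i j) l < (a ∘ Equiv.swap i j) k)
    (hc : c = a ∘ Equiv.swap i j) (hb : b = (a ∘ Equiv.swap i j) ∘ Equiv.swap k l) :
    (∃ i' j' k' l', DisT a b c i' j' k' l') ∨ CycT a b c := by
  have hbp : ∀ p, b p = a (Equiv.swap i j (Equiv.swap k l p)) := fun p => congrFun hb p
  simp only [Function.comp_apply] at h2
  by_cases hki : i = k
  · subst hki
    by_cases hlj : j = l
    · subst hlj
      exact absurd (funext fun p => by rw [hbp p, Equiv.swap_apply_self]) hab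
    · rcases lt_or_gt_of_ne (Ne.symm hlj) with hl2 | hl2
      · -- k = i, l < j : triple (i, l, j), dir 1, s = (x,z)
        right
        refine ⟨i, l, j, hkl, hl2, ?_, Or.inl ⟨?_, ?_, ?_, Or.inr (Or.inr ⟨hc, ?_, ?_⟩)⟩⟩
        · intro p hpi hpl hpj
          rw [hbp p, swap_ne_ne hpi hpl, swap_ne_ne hpi hpj]
        · rw [hbp i, Equiv.swap_apply_left i l, swap_ne_ne (ne_of_gt hkl) (Ne.symm hlj)]
        · rw [hbp l, Equiv.swap_apply_right i l, Equiv.swap_apply_left i j]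
        · rw [hbp j, swap_ne_ne (ne_of_gt hij) (ne_of_gt hl2), Equiv.swap_apply_right i j]
        · exact h1
        · rw [swap_ne_ne (ne_of_gt hkl) (Ne.symm hlj), Equiv.swap_apply_left] at h2
          exact h2
      · -- k = i, l > j : triple (i, j, l), dir 2, s = (x,y)
        right
        refine ⟨i, j, l, hij, hl2, ?_, Or.inr ⟨?_, ?_, ?_, Or.inl ⟨hc, h1, ?_⟩⟩⟩
        · intro p hpi hpj hpl
          rw [hbp p, swap_ne_ne hpi hpl, swap_ne_ne hpi hpj]
        · rw [hbp i, Equiv.swap_apply_left i l, swap_ne_ne (ne_of_gt hkl) (ne_of_gt hl2)]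
        · rw [hbp j, swap_ne_ne (ne_of_gt hij) (ne_of_lt hl2), Equiv.swap_apply_right i j]
        · rw [hbp l, Equiv.swap_apply_right i l, Equiv.swap_apply_left i j]
        · rw [swap_ne_ne (ne_of_gt hkl) (ne_of_gt hl2), Equiv.swap_apply_left] at h2
          exact h2
  · by_cases hkj : j = k
    · -- k = j : triple (i, j, l), dir 1, s = (x,y)
      subst hkj
      right
      refine ⟨i, j, l, hij, hkl, ?_, Or.inl ⟨?_, ?_, ?_, Or.inl ⟨hc, h1, ?_⟩⟩⟩
      · intro p hpi hpj hpl
        rw [hbp p, swap_ne_ne hpj hpl, swap_ne_ne hpi hpj]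
      · rw [hbp i, swap_ne_ne (ne_of_lt hij) (ne_of_lt (hij.trans hkl)),
          Equiv.swap_apply_left i j]
      · rw [hbp j, Equiv.swap_apply_left j l,
          swap_ne_ne (ne_of_gt (hij.trans hkl)) (ne_of_gt hkl)]
      · rw [hbp l, Equiv.swap_apply_right j l, Equiv.swap_apply_right i j]
      · rw [swap_ne_ne (ne_of_gt (hij.trans hkl)) (ne_of_gt hkl),
          Equiv.swap_apply_right i j] at h2
        exact h2
    · by_cases hli : i = l
      · -- l = i : triple (k, i, j), dir 2, s = (y,z)
        subst hli
        right
        refine ⟨k, i, j, hkl, hij, ?_, Or.inr ⟨?_, ?_, ?_, Or.inr (Or.inl ⟨hc, h1, ?_⟩)⟩⟩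
        · intro p hpk hpi hpj
          rw [hbp p, swap_ne_ne hpk hpi, swap_ne_ne hpi hpj]
        · rw [hbp k, Equiv.swap_apply_left, Equiv.swap_apply_left]
        · rw [hbp i, Equiv.swap_apply_right, swap_ne_ne hkl.ne (hkl.trans hij).ne]
        · rw [hbp j, swap_ne_ne (hkl.trans hij).ne' hij.ne', Equiv.swap_apply_right]
        · rw [Equiv.swap_apply_left, swap_ne_ne hkl.ne (hkl.trans hij).ne] at h2
          exact h2
      · by_cases hlj : j = l
        · subst hlj
          rcases lt_or_gt_of_ne (fun e => hki e) with hk2 | hk2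
          · -- i < k < j, l = j : triple (i, k, j), dir 2, s = (x,z)
            right
            refine ⟨i, k, j, hk2, hkl, ?_, Or.inr ⟨?_, ?_, ?_, Or.inr (Or.inr ⟨hc, h1, ?_⟩)⟩⟩
            · intro p hpi hpk hpj
              rw [hbp p, swap_ne_ne hpk hpj, swap_ne_ne hpi hpj]
            · rw [hbp i, swap_ne_ne hk2.ne hij.ne, Equiv.swap_apply_left]
            · rw [hbp k, Equiv.swap_apply_left, Equiv.swap_apply_right]
            · rw [hbp j, Equiv.swap_apply_right, swap_ne_ne hk2.ne' hkl.ne]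
            · rw [Equiv.swap_apply_right, swap_ne_ne hk2.ne' hkl.ne] at h2
              exact h2
          · -- k < i, l = j : triple (k, i, j), dir 1, s = (y,z)
            right
            refine ⟨k, i, j, hk2, hij, ?_, Or.inl ⟨?_, ?_, ?_, Or.inr (Or.inl ⟨hc, h1, ?_⟩)⟩⟩
            · intro p hpk hpi hpj
              rw [hbp p, swap_ne_ne hpk hpj, swap_ne_ne hpi hpj]
            · rw [hbp k, Equiv.swap_apply_left, Equiv.swap_apply_right]
            · rw [hbp i, swap_ne_ne hk2.ne' hij.ne, Equiv.swap_apply_left]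
            · rw [hbp j, Equiv.swap_apply_right, swap_ne_ne hk2.ne (hk2.trans hij).ne]
            · rw [Equiv.swap_apply_right, swap_ne_ne hk2.ne (hk2.trans hij).ne] at h2
              exact h2
        · -- disjoint
          left
          refine ⟨i, j, k, l, hij, hkl, hki, hli, hkj, hlj, ?_, ?_, ?_, ?_, hc, ?_⟩
          · rw [hbp i, swap_ne_ne hki hli, Equiv.swap_apply_left]
          · rw [hbp j, swap_ne_ne hkj hlj, Equiv.swap_apply_right]
          · rw [hbp k, Equiv.swap_apply_left, swap_ne_ne (Ne.symm hli) (Ne.symm hlj)]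
          · rw [hbp l, Equiv.swap_apply_right, swap_ne_ne (Ne.symm hki) (Ne.symm hkj)]
          · intro p hpi hpj hpk hpl
            rw [hbp p, swap_ne_ne hpk hpl, swap_ne_ne hpi hpj]

lemma dis_pair {m : ℕ} {a b c c' : Fin m → ℕ} (ha : Function.Injective a)
    {i j k l i' j' k' l' : Fin m} (h : DisT a b c i j k l) (h' : DisT a b c' i' j' k' l') :
    c' = c ∨ c' = a ∘ Equiv.swap k l := by
  obtain ⟨hij, hkl, hik, hil, hjk, hjl, bi, bj, bk, bl, hceq, hoff⟩ := h
  obtain ⟨hij', hkl', -, -, -, -, bi', bj', bk', bl', hceq', hoff'⟩ := h'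
  have hmem : i' = i ∨ i' = j ∨ i' = k ∨ i' = l := by
    by_contra hcon
    push_neg at hcon
    obtain ⟨n1, n2, n3, n4⟩ := hcon
    have h0 := hoff i' n1 n2 n3 n4
    rw [bi'] at h0
    exact hij'.ne (ha h0).symm
  rcases hmem with h0 | h0 | h0 | h0
  · left
    have : a j' = a j := by rw [← bi', ← bi, h0]
    have hj : j' = j := ha this
    rw [hceq', hceq, h0, hj]
  · exfalso
    have : a j' = a i := by rw [← bi', ← bj, h0]
    have hj : j' = i := ha this
    rw [h0, hj] at hij'
    exact absurd hij' (not_lt.mpr hij.le)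
  · right
    have : a j' = a l := by rw [← bi', ← bk, h0]
    have hj : j' = l := ha this
    rw [hceq', h0, hj]
  · exfalso
    have : a j' = a k := by rw [← bi', ← bl, h0]
    have hj : j' = k := ha this
    rw [h0, hj] at hij'
    exact absurd hij' (not_lt.mpr hkl.le)

lemma dis_cyc_false {m : ℕ} {a b c c' : Fin m → ℕ} (ha : Function.Injective a)
    {i j k l : Fin m} (h : DisT a b c i j k l) (h' : CycT a b c') : False := by
  obtain ⟨hij, hkl, hik, hil, hjk, hjl, bi, bj, bk, bl, -, -⟩ := h
  obtain ⟨x, y, z, hxy, hyz, hoff', -⟩ := h'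
  have hbne : ∀ q, q = i ∨ q = j ∨ q = k ∨ q = l → b q ≠ a q := by
    rintro q (rfl | rfl | rfl | rfl)
    · rw [bi]; exact fun e => hij.ne' (ha e)
    · rw [bj]; exact fun e => hij.ne (ha e)
    · rw [bk]; exact fun e => hkl.ne' (ha e)
    · rw [bl]; exact fun e => hkl.ne (ha e)
  have hsub : ∀ q, q = i ∨ q = j ∨ q = k ∨ q = l → (q = x ∨ q = y ∨ q = z) := by
    intro q hq
    by_contra hcon
    push_neg at hcon
    exact hbne q hq (hoff' q hcon.1 hcon.2.1 hcon.2.2)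
  have fsub : ({i, j, k, l} : Finset (Fin m)) ⊆ ({x, y, z} : Finset (Fin m)) := by
    intro q hq
    simp only [Finset.mem_insert, Finset.mem_singleton] at hq ⊢
    exact hsub q hq
  have h4 : ({i, j, k, l} : Finset (Fin m)).card = 4 := by
    rw [Finset.card_insert_of_notMem (by simp [hik, hil, hij.ne]),
      Finset.card_insert_of_notMem (by simp [hjk, hjl]),
      Finset.card_insert_of_notMem (by simp [hkl.ne]), Finset.card_singleton]
  have h3 : ({x, y, z} : Finset (Fin m)).card ≤ 3 := by
    refine le_trans (Finset.card_insert_le _ _) (Nat.succ_le_succ ?_)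
    refine le_trans (Finset.card_insert_le _ _) (Nat.succ_le_succ ?_)
    exact le_of_eq (Finset.card_singleton _)
  have := Finset.card_le_card fsub
  omega

lemma triple_eq {m : ℕ} {x y z x' y' z' : Fin m} (h1 : x < y) (h2 : y < z)
    (h3 : x' < y') (h4 : y' < z')
    (m1 : x' = x ∨ x' = y ∨ x' = z) (m2 : y' = x ∨ y' = y ∨ y' = z)
    (m3 : z' = x ∨ z' = y ∨ z' = z) : x' = x ∧ y' = y ∧ z' = z := by
  simp only [Fin.ext_iff, Fin.lt_def] at *
  omega

lemma cyc_align {m : ℕ} {a b c : Fin m → ℕ} (ha : Function.Injective a)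
    {x y z : Fin m} (hxy : x < y) (hyz : y < z)
    (hoff : ∀ p, p ≠ x → p ≠ y → p ≠ z → b p = a p)
    (h : CycT a b c) :
    ((b x = a y ∧ b y = a z ∧ b z = a x ∧
      ((c = a ∘ Equiv.swap x y ∧ a y < a x ∧ a z < a x)
      ∨ (c = a ∘ Equiv.swap y z ∧ a z < a y ∧ a y < a x)
      ∨ (c = a ∘ Equiv.swap x z ∧ a z < a x ∧ a y < a z)))
    ∨ (b x = a z ∧ b y = a x ∧ b z = a y ∧
      ((c = a ∘ Equiv.swap x y ∧ a y < a x ∧ a z < a y)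
      ∨ (c = a ∘ Equiv.swap y z ∧ a z < a y ∧ a z < a x)
      ∨ (c = a ∘ Equiv.swap x z ∧ a z < a x ∧ a x < a y)))) := by
  obtain ⟨x', y', z', hxy', hyz', hoff', hd⟩ := h
  have hne : b x' ≠ a x' ∧ b y' ≠ a y' ∧ b z' ≠ a z' := by
    rcases hd with ⟨e1, e2, e3, -⟩ | ⟨e1, e2, e3, -⟩
    · exact ⟨fun e => hxy'.ne' (ha (e1.symm.trans e)),
        fun e => hyz'.ne' (ha (e2.symm.trans e)),
        fun e => (hxy'.trans hyz').ne (ha (e3.symm.trans e))⟩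
    · exact ⟨fun e => (hxy'.trans hyz').ne' (ha (e1.symm.trans e)),
        fun e => hxy'.ne (ha (e2.symm.trans e)),
        fun e => hyz'.ne (ha (e3.symm.trans e))⟩
  have hm : ∀ q, b q ≠ a q → (q = x ∨ q = y ∨ q = z) := by
    intro q hq
    by_contra hcon
    push_neg at hcon
    exact hq (hoff q hcon.1 hcon.2.1 hcon.2.2)
  obtain ⟨e1, e2, e3⟩ := triple_eq hxy hyz hxy' hyz'
    (hm x' hne.1) (hm y' hne.2.1) (hm z' hne.2.2)
  rw [e1, e2, e3] at hd
  exact hd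

lemma cyc3 {m : ℕ} {a b c1 c2 c3 : Fin m → ℕ} (ha : Function.Injective a)
    (h1 : CycT a b c1) (h2 : CycT a b c2) (h3 : CycT a b c3) :
    c1 = c2 ∨ c1 = c3 ∨ c2 = c3 := by
  obtain ⟨x, y, z, hxy, hyz, hoff, hd1⟩ := h1
  have hd2 := cyc_align ha hxy hyz hoff h2
  have hd3 := cyc_align ha hxy hyz hoff h3
  rcases hd1 with ⟨f1, f2, f3, r1⟩ | ⟨f1, f2, f3, r1⟩ <;>
    rcases hd2 with ⟨g1, g2, g3, r2⟩ | ⟨g1, g2, g3, r2⟩ <;>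
    rcases hd3 with ⟨k1, k2, k3, r3⟩ | ⟨k1, k2, k3, r3⟩ <;>
    [skip;
     exact absurd (ha (f1.symm.trans k1)) hyz.ne;
     exact absurd (ha (f1.symm.trans g1)) hyz.ne;
     exact absurd (ha (f1.symm.trans g1)) hyz.ne;
     exact absurd (ha (g1.symm.trans f1)) hyz.ne;
     exact absurd (ha (g1.symm.trans f1)) hyz.ne;
     exact absurd (ha (k1.symm.trans f1)) hyz.ne; skip] <;>
  · rcases r1 with ⟨e1, p1, q1⟩ | ⟨e1, p1, q1⟩ | ⟨e1, p1, q1⟩ <;>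
      rcases r2 with ⟨e2, p2, q2⟩ | ⟨e2, p2, q2⟩ | ⟨e2, p2, q2⟩ <;>
      rcases r3 with ⟨e3, p3, q3⟩ | ⟨e3, p3, q3⟩ | ⟨e3, p3, q3⟩ <;>
      first
        | exact Or.inl (e1.trans e2.symm)
        | exact Or.inr (Or.inl (e1.trans e3.symm))
        | exact Or.inr (Or.inr (e2.trans e3.symm))
        | omega

lemma core3 {m : ℕ} {a b : Fin m → ℕ} (ha : Function.Injective a) (hab : a ≠ b)
    {c1 c2 c3 : Fin m → ℕ}
    (h1 : BruhatStep a c1 ∧ BruhatStep c1 b)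
    (h2 : BruhatStep a c2 ∧ BruhatStep c2 b)
    (h3 : BruhatStep a c3 ∧ BruhatStep c3 b) :
    c1 = c2 ∨ c1 = c3 ∨ c2 = c3 := by
  obtain ⟨⟨i1, j1, hij1, hv1, hc1⟩, ⟨k1, l1, hkl1, hw1, hb1⟩⟩ := h1
  obtain ⟨⟨i2, j2, hij2, hv2, hc2⟩, ⟨k2, l2, hkl2, hw2, hb2⟩⟩ := h2
  obtain ⟨⟨i3, j3, hij3, hv3, hc3⟩, ⟨k3, l3, hkl3, hw3, hb3⟩⟩ := h3
  rw [hc1] at hw1 hb1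
  rw [hc2] at hw2 hb2
  rw [hc3] at hw3 hb3
  have H1 := classify hab hij1 hv1 hkl1 hw1 hc1 hb1
  have H2 := classify hab hij2 hv2 hkl2 hw2 hc2 hb2
  have H3 := classify hab hij3 hv3 hkl3 hw3 hc3 hb3
  rcases H1 with ⟨i, j, k, l, hD1⟩ | hC1
  · rcases H2 with ⟨i', j', k', l', hD2⟩ | hC2
    · rcases H3 with ⟨i'', j'', k'', l'', hD3⟩ | hC3
      · rcases dis_pair ha hD1 hD2 with e2 | e2
        · exact Or.inl e2.symm
        · rcases dis_pair ha hD1 hD3 with e3 | e3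
          · exact Or.inr (Or.inl e3.symm)
          · exact Or.inr (Or.inr (e2.trans e3.symm))
      · exact absurd (dis_cyc_false ha hD1 hC3) (fun h => h)
    · exact absurd (dis_cyc_false ha hD1 hC2) (fun h => h)
  · rcases H2 with ⟨i', j', k', l', hD2⟩ | hC2
    · exact absurd (dis_cyc_false ha hD2 hC1) (fun h => h)
    · rcases H3 with ⟨i'', j'', k'', l'', hD3⟩ | hC3
      · exact absurd (dis_cyc_false ha hD3 hC1) (fun h => h)
      · exact cyc3 ha hC1 hC2 hC3

lemma domRank_eq_asc {S : Type*} [PartialOrder S] {m : ℕ} (A : AntiLin S m)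
    (hsurj : Function.Surjective A.v) {d : Fin m → ℕ} (hd : SDominant A d) :
    domRank A d = asc d := by
  have hinj : Function.Injective (fun p : S × S => (A.v p.1, A.v p.2)) := by
    intro p q h
    have h1 := congrArg Prod.fst h
    have h2 := congrArg Prod.snd h
    simp only at h1 h2
    exact Prod.ext (A.inj h1) (A.inj h2)
  have himg : (fun p : S × S => (A.v p.1, A.v p.2)) ''
      {p : S × S | ¬ p.2 ≤ p.1 ∧ A.v p.1 < A.v p.2 ∧ d (A.v p.1) < d (A.v p.2)}
      = ascSet d := by
    ext ⟨i, j⟩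
    constructor
    · rintro ⟨⟨s, t⟩, ⟨h1, h2, h3⟩, heq⟩
      have e1 : A.v s = i := congrArg Prod.fst heq
      have e2 : A.v t = j := congrArg Prod.snd heq
      rw [← e1, ← e2]
      exact ⟨h2, h3⟩
    · rintro ⟨hij, hdij⟩
      obtain ⟨s, rfl⟩ := hsurj i
      obtain ⟨t, rfl⟩ := hsurj j
      refine ⟨(s, t), ⟨?_, hij, hdij⟩, rfl⟩
      intro hts
      simp only at hts hij hdij
      rcases eq_or_lt_of_le hts with heq | hlt
      · rw [heq] at hij; exact absurd hij (lt_irrefl _)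
      · exact absurd hdij (not_lt.mpr (hd.2 s t hlt))
  rw [domRank, asc, ← himg, Set.ncard_image_of_injective _ hinj]

/-- For regular `λ`, the poset of `S`-dominant compositions is subthin: every
interval of rank difference two contains at most two `S`-dominant compositions
strictly in between. -/
theorem stmt_12 {S : Type*} [PartialOrder S] [Finite S] {m : ℕ} (A : AntiLin S m)
    (hsurj : Function.Surjective A.v)
    (a b : Fin m → ℕ) (hreg : Function.Injective a)
    (ha : SDominant A a) (hb : SDominant A b)
    (hlt : BruhatLT a b) (hrk : domRank A b = domRank A a + 2) :
    Set.ncard {c : Fin m → ℕ | SDominant A c ∧ BruhatLT a c ∧ BruhatLT c b} ≤ 2 := by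
  set M := {c : Fin m → ℕ | SDominant A c ∧ BruhatLT a c ∧ BruhatLT c b} with hM
  have hasc : asc b = asc a + 2 := by
    rw [← domRank_eq_asc A hsurj ha, ← domRank_eq_asc A hsurj hb]; exact hrk
  have hMfin : M.Finite := by
    apply Set.Finite.subset (Set.finite_range
      (fun p : Fin m × Fin m => a ∘ (Equiv.swap p.1 p.2 : Equiv.Perm (Fin m))))
    rintro c ⟨-, hac, hcb⟩
    obtain ⟨hs1, -⟩ := step_of_middle hasc hac hcb
    obtain ⟨i, j, -, -, rfl⟩ := hs1
    exact ⟨(i, j), rfl⟩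
  by_contra hcon
  push_neg at hcon
  obtain ⟨c1, c2, c3, hc1, hc2, hc3, h12, h13, h23⟩ :=
    (Set.two_lt_ncard_iff hMfin).mp hcon
  obtain ⟨-, h1a, h1b⟩ := hc1
  obtain ⟨-, h2a, h2b⟩ := hc2
  obtain ⟨-, h3a, h3b⟩ := hc3
  rcases core3 hreg hlt.2 (step_of_middle hasc h1a h1b)
    (step_of_middle hasc h2a h2b) (step_of_middle hasc h3a h3b) with h | h | h
  · exact h12 h
  · exact h13 h
  · exact h23 h
end

section
/- Let n̄ = (n_1 ≤ ... ≤ n_m) with each row and column of Y_{n̄} containing a staircase corner (so m = n_m = #Sc_{n̄}), and let λ be a partition with l(λ) ≤ #Sc_{n̄}. For any two DL-dense arrays A, B of shape Y_{n̄} with multiset of nonzero entries λ, the Bruhat comparison of their horizontal weights is equivalent to that of their vertical weights: hor(A) ≤ hor(B) in the Bruhat order on S_{n_m}·λ if and only if vrt(A) ≤ vrt(B) in the Bruhat order on S_m·λ. -/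
open Finset Equiv

theorem Finset.card_filter_le_of_forall_card_filter_le {ι α : Type*} [Fintype ι]
    [LinearOrder α] (f : ι → α) (p : ι → Prop) [DecidablePred p] {S T : Finset ι}
    (hdom : ∀ c, #{j ∈ T | f j ≤ c} ≤ #{j ∈ S | f j ≤ c})
    (hT : ∀ j ∈ T, p j → ∀ i, ¬ p i → f i ≤ f j → i ∈ T) :
    #{j ∈ T | p j} ≤ #{j ∈ S | p j} := by
  rcases {j ∈ T | p j}.eq_empty_or_nonempty with hempty | hne
  · simp [hempty]
  obtain ⟨j₀, hj₀, hmax⟩ := exists_max_image _ f hne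
  rw [mem_filter] at hj₀
  have hT_split :
      #{j ∈ T | f j ≤ f j₀} = #{j ∈ T | p j} + #{i | ¬ p i ∧ f i ≤ f j₀} := by
    rw [← card_filter_add_card_filter_not (s := {j ∈ T | f j ≤ f j₀}) p]
    congr 2
    · ext j
      have := hmax j
      simp only [mem_filter] at this ⊢
      tauto
    · ext i
      have := hT j₀ hj₀.1 hj₀.2 i
      simp only [mem_filter, mem_univ, true_and]
      tauto
  have hS_split :
      #{j ∈ S | f j ≤ f j₀} ≤ #{j ∈ S | p j} + #{i | ¬ p i ∧ f i ≤ f j₀} := by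
    rw [← card_filter_add_card_filter_not (s := {j ∈ S | f j ≤ f j₀}) p]
    gcongr
    · intro j; simp only [mem_filter]; tauto
    · intro i; simp only [mem_filter, mem_univ, true_and]; tauto
  have := hdom (f j₀)
  omega

theorem Finset.card_filter_not_le_iff {ι : Type*} (p : ι → Prop) [DecidablePred p]
    {s t : Finset ι} (hst : #s = #t) :
    #{j ∈ s | ¬ p j} ≤ #{j ∈ t | ¬ p j} ↔ #{j ∈ t | p j} ≤ #{j ∈ s | p j} := by
  have hs := card_filter_add_card_filter_not (s := s) (fun j => p j)
  have ht := card_filter_add_card_filter_not (s := t) (fun j => p j)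
  omega

theorem Fintype.sum_add_pair_eq_sum_add_pair {ι M : Type*} [Fintype ι] [DecidableEq ι]
    [AddCommMonoid M] {f g : ι → M} {x y : ι} (hxy : x ≠ y)
    (h : ∀ j, j ≠ x → j ≠ y → f j = g j) :
    ∑ j, f j + (g x + g y) = ∑ j, g j + (f x + f y) := by
  have hrest : ∑ j ∈ univ \ {x, y}, f j = ∑ j ∈ univ \ {x, y}, g j :=
    Finset.sum_congr rfl fun j hj => h j (by simp_all) (by simp_all)
  rw [← sum_sdiff (subset_univ {x, y}) (f := f), ← sum_sdiff (subset_univ {x, y}) (f := g),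
    sum_pair hxy, sum_pair hxy, hrest]
  abel

section Bruhat

variable {m : ℕ}

theorem card_filter_comp_perm (d : Fin m → ℕ) (σ : Perm (Fin m)) (p : ℕ → Prop)
    [DecidablePred p] :
    #{j : Fin m | p (d (σ j))} = #{j : Fin m | p (d j)} :=
  card_equiv σ (by simp)

def prefixCount (d : Fin m → ℕ) (t k : ℕ) : ℕ :=
  #{j : Fin m | (j : ℕ) < k ∧ t ≤ d j}

theorem prefixCount_eq_sum (d : Fin m → ℕ) (t k : ℕ) :
    prefixCount d t k = ∑ j : Fin m, if (j : ℕ) < k ∧ t ≤ d j then 1 else 0 :=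
  card_filter _ _

theorem prefixCount_succ (d : Fin m → ℕ) (t : ℕ) (x : Fin m) :
    prefixCount d t (x + 1) = prefixCount d t x + if t ≤ d x then 1 else 0 := by
  have hsplit : ∀ j : Fin m, (if (j : ℕ) < x + 1 ∧ t ≤ d j then 1 else 0)
      = (if (j : ℕ) < x ∧ t ≤ d j then 1 else 0)
        + if x = j then (if t ≤ d j then 1 else 0) else 0 := by
    intro j
    rcases lt_trichotomy j x with h | rfl | h
    · have : (j : ℕ) < x := h
      simp [h.ne', this, Nat.lt_succ_of_lt this]
    · simp
    · have : (x : ℕ) < j := h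
      simp [h.ne, this.not_gt, show ¬ (j : ℕ) < x + 1 by omega]
  simp only [prefixCount_eq_sum, hsplit, sum_add_distrib, sum_ite_eq, mem_univ, if_true]

theorem prefixCount_congr {d d' : Fin m → ℕ} {k : ℕ}
    (h : ∀ j : Fin m, (j : ℕ) < k → d j = d' j) (t : ℕ) :
    prefixCount d t k = prefixCount d' t k := by
  unfold prefixCount
  congr 1
  exact filter_congr fun j _ => and_congr_right fun hj => by rw [h j hj]

theorem prefixCount_comp_swap_add (d : Fin m → ℕ) {x y : Fin m} (hxy : x ≠ y) (t k : ℕ) :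
    prefixCount (d ∘ swap x y) t k
          + ((if (x : ℕ) < k ∧ t ≤ d x then 1 else 0)
            + if (y : ℕ) < k ∧ t ≤ d y then 1 else 0)
      = prefixCount d t k
          + ((if (y : ℕ) < k ∧ t ≤ d x then 1 else 0)
            + if (x : ℕ) < k ∧ t ≤ d y then 1 else 0) := by
  rw [prefixCount_eq_sum, prefixCount_eq_sum, ← Equiv.sum_comp (swap x y)]
  convert Fintype.sum_add_pair_eq_sum_add_pair hxy
    (f := fun j => if (swap x y j : ℕ) < k ∧ t ≤ d j then 1 else 0)
    (g := fun j => if (j : ℕ) < k ∧ t ≤ d j then 1 else 0)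
    (fun j hx hy => by simp [swap_apply_of_ne_of_ne hx hy]) using 3 <;> simp

theorem prefixCount_comp_swap_le {d : Fin m → ℕ} {x y : Fin m} (hxy : x < y) (hd : d y < d x)
    (t k : ℕ) : prefixCount (d ∘ swap x y) t k ≤ prefixCount d t k := by
  have hswap := prefixCount_comp_swap_add d hxy.ne t k
  have : (x : ℕ) < y := hxy
  split_ifs at hswap <;> omega

theorem BruhatLE.prefixCount_le {d d' : Fin m → ℕ} (h : BruhatLE d d') (t k : ℕ) :
    prefixCount d' t k ≤ prefixCount d t k := by
  induction h with
  | refl => exact le_rfl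
  | tail _ hstep ih =>
    obtain ⟨x, y, hxy, hd, rfl⟩ := hstep
    exact (prefixCount_comp_swap_le hxy hd t k).trans ih

def positionWeight (d : Fin m → ℕ) : ℕ :=
  ∑ j : Fin m, (m - j) * d j

theorem positionWeight_comp_swap_lt {d : Fin m → ℕ} {x y : Fin m} (hxy : x < y)
    (hd : d y < d x) : positionWeight (d ∘ swap x y) < positionWeight d := by
  have hpair := Fintype.sum_add_pair_eq_sum_add_pair hxy.ne
    (f := fun j => (m - (swap x y j : ℕ)) * d j) (g := fun j => (m - (j : ℕ)) * d j)
    (fun j hx hy => by simp [swap_apply_of_ne_of_ne hx hy])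
  simp only [swap_apply_left, swap_apply_right] at hpair
  have hgap : (m - (y : ℕ)) * d x + (m - (x : ℕ)) * d y
      < (m - (x : ℕ)) * d x + (m - (y : ℕ)) * d y := by
    obtain ⟨c, hc⟩ : ∃ c, m - (x : ℕ) = m - (y : ℕ) + c + 1 :=
      ⟨(m - x) - (m - y) - 1, by omega⟩
    rw [hc]
    nlinarith
  unfold positionWeight
  rw [← Equiv.sum_comp (swap x y)]
  simp only [Function.comp_apply, swap_apply_self]
  omega

theorem exists_gt_apply_eq_of_forall_lt_eq {d d' : Fin m → ℕ}
    (horb : ∃ σ : Perm (Fin m), d' = d ∘ σ) {x : Fin m} (hx : d x ≠ d' x)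
    (hagree : ∀ j < x, d j = d' j) : ∃ y, x < y ∧ d y = d' x := by
  by_contra! hnone
  obtain ⟨σ, rfl⟩ := horb
  have hsub :
      ({j | d j = d (σ x)} : Finset (Fin m)) ⊂ ({j | d (σ j) = d (σ x)} : Finset _) := by
    refine ssubset_iff_of_subset (fun j hj => ?_) |>.2 ⟨x, by simp, by simpa using hx⟩
    simp only [mem_filter, mem_univ, true_and] at hj ⊢
    rcases lt_trichotomy j x with h | rfl | h
    · rw [← hj, hagree j h]; rfl
    · exact absurd hj hx
    · exact absurd hj (hnone j h)
  have := card_lt_card hsub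
  rw [card_filter_comp_perm d σ (· = d (σ x))] at this
  exact this.false

theorem prefixCount_lt_of_first_diff {d d' : Fin m → ℕ} {x : Fin m} {t k : ℕ}
    (hagree : ∀ j < x, d j = d' j) (hxk : (x : ℕ) < k) (ht : d' x < t) (htx : t ≤ d x)
    (hgap : ∀ j, x < j → (j : ℕ) < k → d j < d' x ∨ d x ≤ d j)
    (hdom : prefixCount d' (d' x) k ≤ prefixCount d (d' x) k) :
    prefixCount d' t k < prefixCount d t k := by
  -- Thresholds `t` and `d' x` see the same entries of `d` after `x` (by `hgap`), and at most as
  -- many entries of `d'` are `≥ t`; the extra `1` is position `x`, counted for `d` at `t` only.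
  suffices prefixCount d (d' x) k + prefixCount d' t k + 1
      ≤ prefixCount d t k + prefixCount d' (d' x) k by omega
  simp only [prefixCount_eq_sum, ← sum_add_distrib]
  have key : ∑ j : Fin m, (((if (j : ℕ) < k ∧ d' x ≤ d j then 1 else 0)
      + if (j : ℕ) < k ∧ t ≤ d' j then 1 else 0) + if x = j then 1 else 0)
      ≤ ∑ j : Fin m, ((if (j : ℕ) < k ∧ t ≤ d j then 1 else 0)
      + if (j : ℕ) < k ∧ d' x ≤ d' j then 1 else 0) := sum_le_sum fun j _ => ?_
  · simpa only [sum_add_distrib, sum_ite_eq, mem_univ, if_true] using key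
  rcases lt_trichotomy j x with h | rfl | h
  · rw [hagree j h, if_neg h.ne']
    split_ifs <;> omega
  · simp only [if_true]
    split_ifs <;> omega
  · have := hgap j h
    rw [if_neg h.ne]
    split_ifs <;> omega

theorem exists_swap_prefixCount_le {d d' : Fin m → ℕ} (hne : d ≠ d')
    (horb : ∃ σ : Perm (Fin m), d' = d ∘ σ)
    (hdom : ∀ t k, prefixCount d' t k ≤ prefixCount d t k) :
    ∃ x y : Fin m, x < y ∧ d y < d x ∧
      ∀ t k, prefixCount d' t k ≤ prefixCount (d ∘ swap x y) t k := by
  obtain ⟨x, hx, hxmin⟩ := exists_min_image {j | d j ≠ d' j} id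
    (by obtain ⟨j, hj⟩ := Function.ne_iff.1 hne; exact ⟨j, by simpa using hj⟩)
  simp only [mem_filter, mem_univ, true_and, id] at hx hxmin
  have hagree : ∀ j < x, d j = d' j := fun j hj => by_contra fun h => (hxmin j h).not_gt hj
  have hlt : d' x < d x := by
    have h := hdom (d' x) (x + 1)
    rw [prefixCount_succ, prefixCount_succ, prefixCount_congr hagree, if_pos le_rfl] at h
    split_ifs at h <;> omega
  obtain ⟨y, hy, hymin⟩ := exists_min_image {y | x < y ∧ d' x ≤ d y ∧ d y < d x} id
    (by obtain ⟨y, hxy, hy⟩ := exists_gt_apply_eq_of_forall_lt_eq horb hx hagree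
        exact ⟨y, by simp [hxy, hy, hlt]⟩)
  simp only [mem_filter, mem_univ, true_and, id] at hy hymin
  obtain ⟨hxy, hvy, hyx⟩ := hy
  refine ⟨x, y, hxy, by omega, fun t k => ?_⟩
  have hswap := prefixCount_comp_swap_add d hxy.ne t k
  by_cases hcrit : (x : ℕ) < k ∧ k ≤ y ∧ d y < t ∧ t ≤ d x
  · have hgap : ∀ j, x < j → (j : ℕ) < k → d j < d' x ∨ d x ≤ d j := by
      intro j hxj hjk
      have : ¬ (x < j ∧ d' x ≤ d j ∧ d j < d x) := fun h =>
        (hymin j h).not_gt (Fin.lt_def.2 (by omega))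
      omega
    have := prefixCount_lt_of_first_diff hagree hcrit.1 (by omega) hcrit.2.2.2 hgap (hdom _ k)
    split_ifs at hswap <;> omega
  · have := hdom t k
    have : (x : ℕ) < y := hxy
    split_ifs at hswap <;> omega

theorem bruhatLE_of_prefixCount_le {d d' : Fin m → ℕ}
    (horb : ∃ σ : Perm (Fin m), d' = d ∘ σ)
    (hdom : ∀ t k, prefixCount d' t k ≤ prefixCount d t k) : BruhatLE d d' := by
  induction hw : positionWeight d using Nat.strong_induction_on generalizing d with
  | _ n ih =>
  obtain rfl | hne := eq_or_ne d d'
  · exact .refl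
  obtain ⟨x, y, hxy, hd, hdom'⟩ := exists_swap_prefixCount_le hne horb hdom
  obtain ⟨σ, rfl⟩ := horb
  refine .head ⟨x, y, hxy, hd, rfl⟩
    (ih _ (hw ▸ positionWeight_comp_swap_lt hxy hd) ⟨swap x y * σ, ?_⟩ hdom' rfl)
  ext j
  simp

theorem bruhatLE_iff_prefixCount_le {d d' : Fin m → ℕ}
    (horb : ∃ σ : Perm (Fin m), d' = d ∘ σ) :
    BruhatLE d d' ↔ ∀ t k, prefixCount d' t k ≤ prefixCount d t k :=
  ⟨BruhatLE.prefixCount_le, bruhatLE_of_prefixCount_le horb⟩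

theorem prefixCount_comp_symm (d : Fin m → ℕ) (π : Perm (Fin m)) (t K : ℕ) :
    prefixCount (d ∘ π.symm) t K = #{j : Fin m | (π j : ℕ) < K ∧ t ≤ d j} :=
  card_equiv π.symm (by simp)

theorem prefixCount_comp_symm_le_of_prefixCount_le (π : Perm (Fin m)) {a b : Fin m → ℕ}
    (hb : ∀ j j' : Fin m, j ≤ j' → π j' ≤ π j → b j' ≤ b j) {t : ℕ}
    (hcols : ∀ k, prefixCount b t k ≤ prefixCount a t k) (K : ℕ) :
    prefixCount (b ∘ π.symm) t K ≤ prefixCount (a ∘ π.symm) t K := by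
  have := card_filter_le_of_forall_card_filter_le id (fun j => (π j : ℕ) < K)
    (S := {j | t ≤ a j}) (T := {j | t ≤ b j}) (fun c => ?_) (fun j hj hjK i hiK hij => ?_)
  · simpa only [prefixCount_comp_symm, filter_filter, and_comm] using this
  · have := hcols ((c : ℕ) + 1)
    simp only [prefixCount, Nat.lt_succ_iff] at this
    simpa only [filter_filter, id, Fin.le_def, and_comm] using this
  · simp only [mem_filter, mem_univ, true_and] at hj ⊢
    exact hj.trans (hb i j hij (by omega))

theorem prefixCount_le_of_prefixCount_comp_symm_le (π : Perm (Fin m)) {a b : Fin m → ℕ}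
    (ha : ∀ j j' : Fin m, j ≤ j' → π j' ≤ π j → a j' ≤ a j) {t : ℕ}
    (htot : #{j | t ≤ b j} = #{j | t ≤ a j})
    (hrows : ∀ K, prefixCount (b ∘ π.symm) t K ≤ prefixCount (a ∘ π.symm) t K) (k : ℕ) :
    prefixCount b t k ≤ prefixCount a t k := by
  have := card_filter_le_of_forall_card_filter_le (fun j => OrderDual.toDual (π j))
    (fun j => ¬ (j : ℕ) < k) (S := {j | t ≤ b j}) (T := {j | t ≤ a j}) (fun c => ?_)
    (fun j hj hjk i hik hij => ?_)
  · rw [card_filter_not_le_iff _ htot.symm] at this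
    simpa only [prefixCount, filter_filter, and_comm] using this
  · have := (card_filter_not_le_iff (fun j => π j < OrderDual.ofDual c) htot.symm).2
      (by simpa only [prefixCount_comp_symm, filter_filter, and_comm, Fin.lt_def]
        using hrows (OrderDual.ofDual c : Fin m))
    simpa only [OrderDual.toDual_le, filter_filter, not_lt] using this
  · simp only [mem_filter, mem_univ, true_and] at hj ⊢
    exact hj.trans (ha i j (by omega) hij)

end Bruhat

/-- The staircase corners, one in each row and each column, are encoded by the permutation `π`
sending the column of a corner to its row. A DL-dense array is encoded by its vector of corner
values indexed by columns (`a`, resp. `b`): this is its vertical weight, and `a ∘ π.symm` is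
its horizontal weight. -/
theorem stmt_17_general {m : ℕ} (π : Equiv.Perm (Fin m))
    (a b : Fin m → ℕ)
    (hA : ∀ j j' : Fin m, j ≤ j' → π j' ≤ π j → a j' ≤ a j)
    (hB : ∀ j j' : Fin m, j ≤ j' → π j' ≤ π j → b j' ≤ b j)
    (horb : ∃ τ : Equiv.Perm (Fin m), b = a ∘ τ) :
    BruhatLE (a ∘ π.symm) (b ∘ π.symm) ↔ BruhatLE a b := by
  obtain ⟨τ, hτ⟩ := horb
  have htot : ∀ t, #{j | t ≤ b j} = #{j | t ≤ a j} := fun t => by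
    simpa [hτ] using card_filter_comp_perm a τ (t ≤ ·)
  rw [bruhatLE_iff_prefixCount_le ⟨π * τ * π⁻¹, by ext; simp [hτ]⟩,
    bruhatLE_iff_prefixCount_le ⟨τ, hτ⟩]
  exact ⟨fun h t => prefixCount_le_of_prefixCount_comp_symm_le π hA (htot t) (h t),
    fun h t => prefixCount_comp_symm_le_of_prefixCount_le π hB (h t)⟩

/-- Bruhat comparison of horizontal weights is equivalent to Bruhat comparison of
vertical weights of DL-dense arrays.  The poset of staircase corners (one corner in
each row and each column, since `m = n_m = #Sc`) is encoded by the permutation `π`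
sending the column of a corner to its row; the order on corners is
`(π j, j) ⪰ (π j', j') ↔ π j ≥ π j' ∧ j ≤ j'`.  The hypotheses `hvrtcons` and
`hhorcons` express that the column map is a consistent anti-linearization and the
row map a consistent linearization of this arborescent poset.  A DL-dense array with
nonzero-entry multiset `λ` is encoded by its vector of corner values per column
(`a`, resp. `b`, monotone for the corner order); its vertical weight is this vector
and its horizontal weight is the corresponding vector indexed by rows, i.e.
`a ∘ π.symm`. -/
theorem stmt_17 {m : ℕ} (π : Equiv.Perm (Fin m))
    (hvrtcons : ∀ j j' j'' : Fin m, j < j' → j' < j'' → π j'' ≤ π j → π j'' ≤ π j')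
    (hhorcons : ∀ j j' j'' : Fin m, π j < π j' → π j' < π j'' → j'' ≤ j → j'' ≤ j')
    (a b : Fin m → ℕ)
    (hA : ∀ j j' : Fin m, j ≤ j' → π j' ≤ π j → a j' ≤ a j)
    (hB : ∀ j j' : Fin m, j ≤ j' → π j' ≤ π j → b j' ≤ b j)
    (horb : ∃ τ : Equiv.Perm (Fin m), b = a ∘ τ) :
    BruhatLE (a ∘ π.symm) (b ∘ π.symm) ↔ BruhatLE a b :=
  stmt_17_general π a b hA hB horb
end

section
/- Let (S, ≺) be a finite poset with an order-preserving injection h : S → [1, n_m] such that for every s ∈ S, the image h(S_{⪰s}) is an interval [a(s), b(s)] ⊂ [1, n_m], and h^{-1}(n_m) ≠ ∅. Then there exists a weakly increasing sequence n̄ = (n_1 ≤ ... ≤ n_m) and an order isomorphism ψ : S → Sc_{n̄} onto the poset of staircase corners of Y_{n̄} such that h = hor ∘ ψ. -/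
/-- The rows used by the staircase corners in the first `j` columns of the staircase
diagram with column heights `n`: processing columns left to right, column `j+1`
receives the corner in the highest-index free row `≤ n (j+1)`, if any. -/
def usedRows (n : ℕ → ℕ) : ℕ → Finset ℕ
  | 0 => ∅
  | j + 1 => usedRows n j ∪
      WithBot.recBotCoe ∅ (fun i => {i})
        ((Finset.Icc 1 (n (j + 1)) \ usedRows n j).max)

/-- The set of staircase corners of the staircase Young diagram with `m` columns of
heights `n 1 ≤ … ≤ n m`: the cell `(i, j)` is a staircase corner iff `1 ≤ j ≤ m` and
`i` is the largest row `≤ n j` not used by a corner of an earlier column. -/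
def staircaseCorners (m : ℕ) (n : ℕ → ℕ) : Set (ℕ × ℕ) :=
  {p | 1 ≤ p.2 ∧ p.2 ≤ m ∧
    (Finset.Icc 1 (n p.2) \ usedRows n (p.2 - 1)).max = (p.1 : WithBot ℕ)}

/-!
Write `h(S_{⪰s}) = [h s, b s]` with `b s = max h(S_{⪰s})` (`upperMax`). Number the elements of
`S` in the lexicographic order of the keys `(b s, -h s)`; the number of `s` is its column. Then
`s ≤ t ↔ h s ≤ h t ∧ column t ≤ column s`, because `h s ≤ h t ≤ b t ≤ b s` puts `h t` in the
interval of `s`, and injectivity of `h` gives `s ≤ t`.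

With `n j` the largest row used by the first `j` columns, the staircase corner of column
`column s` is `h s`: a free row `v` with `h s < v ≤ n (column s)` would satisfy
`v ≤ b w ≤ b s` for some `w` in an earlier-or-equal column, so `v = h u` with `s < u`, and
`u` lies in an earlier column, so `v` is not free.
-/

open Finset Function

section RankBy

variable {α β : Type*} [Fintype α] [LinearOrder β]

def rankBy (f : α → β) (a : α) : ℕ := #{b | f b ≤ f a}

variable {f : α → β}

theorem rankBy_lt_rankBy_iff {a b : α} : rankBy f a < rankBy f b ↔ f a < f b := by
  refine ⟨fun hlt => ?_, fun hab => card_lt_card ⟨?_, ?_⟩⟩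
  · by_contra! hba
    exact hlt.not_ge (card_le_card fun c hc => by
      simp only [mem_filter, mem_univ, true_and] at hc ⊢; exact hc.trans hba)
  · intro c hc
    simp only [mem_filter, mem_univ, true_and] at hc ⊢
    exact hc.trans hab.le
  · intro hsub
    have hb := hsub (mem_filter.mpr ⟨mem_univ b, le_rfl⟩)
    simp only [mem_filter, mem_univ, true_and] at hb
    exact hb.not_gt hab

theorem rankBy_le_rankBy_iff {a b : α} : rankBy f a ≤ rankBy f b ↔ f a ≤ f b := by
  simpa only [not_lt] using rankBy_lt_rankBy_iff.not

theorem bijOn_rankBy (hf : Injective f) :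
    Set.BijOn (rankBy f) Set.univ (Set.Icc 1 (Fintype.card α)) := by
  have hmaps : Set.MapsTo (rankBy f) Set.univ (Set.Icc 1 (Fintype.card α)) := fun a _ =>
    ⟨card_pos.mpr ⟨a, mem_filter.mpr ⟨mem_univ a, le_rfl⟩⟩, card_filter_le _ _⟩
  have hinj : Set.InjOn (rankBy f) Set.univ := fun a _ b _ hab =>
    hf (le_antisymm (rankBy_le_rankBy_iff.mp hab.le) (rankBy_le_rankBy_iff.mp hab.ge))
  refine ⟨hmaps, hinj, ?_⟩
  have := surjOn_of_injOn_of_card_le (s := univ) (t := Icc 1 (Fintype.card α)) (rankBy f)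
    (by simpa using hmaps) (by simpa using hinj) (by simp)
  simpa using this

end RankBy

section Column

variable {S : Type*} [PartialOrder S] [Fintype S]

open Classical in
noncomputable def upperMax (h : S → ℕ) (s : S) : ℕ := ({t | s ≤ t} : Finset S).sup h

noncomputable def columnKey (h : S → ℕ) (s : S) : ℕ ×ₗ ℕᵒᵈ :=
  toLex (upperMax h s, OrderDual.toDual (h s))

noncomputable def column (h : S → ℕ) (s : S) : ℕ := rankBy (columnKey h) s

variable {h : S → ℕ}

theorem le_upperMax (s : S) : h s ≤ upperMax h s := by
  classical exact le_sup (mem_filter.mpr ⟨mem_univ s, le_rfl⟩)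

theorem upperMax_antitone : Antitone (upperMax h) := by
  classical
  exact fun _ _ hst => sup_mono fun u hu => mem_filter.mpr ⟨mem_univ u, hst.trans (mem_filter.mp hu).2⟩

theorem exists_le_apply_eq_of_le_upperMax {s : S} (hint : (h '' Set.Ici s).OrdConnected)
    {v : ℕ} (hsv : h s ≤ v) (hvs : v ≤ upperMax h s) : ∃ u, s ≤ u ∧ h u = v := by
  classical
  obtain ⟨w, hw, hwmax⟩ := exists_mem_eq_sup _ ⟨s, mem_filter.mpr ⟨mem_univ s, le_rfl⟩⟩ h
  have hvw : v ≤ h w := hwmax ▸ hvs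
  exact hint.out ⟨s, Set.self_mem_Ici, rfl⟩ ⟨w, (mem_filter.mp hw).2, rfl⟩ ⟨hsv, hvw⟩

theorem column_le_column_iff {s t : S} :
    column h s ≤ column h t ↔ upperMax h s < upperMax h t ∨
      upperMax h s = upperMax h t ∧ h t ≤ h s := by
  rw [column, column, rankBy_le_rankBy_iff, columnKey, columnKey, Prod.Lex.toLex_le_toLex]
  rfl

theorem column_lt_column_iff {s t : S} :
    column h s < column h t ↔ upperMax h s < upperMax h t ∨
      upperMax h s = upperMax h t ∧ h t < h s := by
  rw [column, column, rankBy_lt_rankBy_iff, columnKey, columnKey, Prod.Lex.toLex_lt_toLex]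
  rfl

theorem bijOn_column (hinj : Injective h) :
    Set.BijOn (column h) Set.univ (Set.Icc 1 (Fintype.card S)) :=
  bijOn_rankBy fun _ _ hst => hinj (congrArg (fun k => OrderDual.ofDual (ofLex k).2) hst)

theorem le_iff_column_le (hmono : Monotone h) (hinj : Injective h)
    (hint : ∀ s, (h '' Set.Ici s).OrdConnected) {s t : S} :
    s ≤ t ↔ h s ≤ h t ∧ column h t ≤ column h s := by
  rw [column_le_column_iff]
  refine ⟨fun hst => ⟨hmono hst, ?_⟩, fun ⟨hst, hcol⟩ => ?_⟩
  · exact (upperMax_antitone hst).lt_or_eq.imp_right fun heq => ⟨heq, hmono hst⟩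
  · have hts : upperMax h t ≤ upperMax h s := by
      rcases hcol with hlt | ⟨heq, -⟩
      exacts [hlt.le, heq.le]
    obtain ⟨u, hsu, hu⟩ :=
      exists_le_apply_eq_of_le_upperMax (hint s) hst ((le_upperMax t).trans hts)
    exact hinj hu ▸ hsu

theorem exists_column_lt (hint : ∀ s, (h '' Set.Ici s).OrdConnected) {s w : S} {v : ℕ}
    (hws : column h w ≤ column h s) (hsv : h s < v) (hvw : v ≤ h w) :
    ∃ u, column h u < column h s ∧ h u = v := by
  have hws' : upperMax h w ≤ upperMax h s := by
    rcases column_le_column_iff.mp hws with hlt | ⟨heq, -⟩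
    exacts [hlt.le, heq.le]
  obtain ⟨u, hsu, rfl⟩ :=
    exists_le_apply_eq_of_le_upperMax (hint s) hsv.le (hvw.trans ((le_upperMax w).trans hws'))
  refine ⟨u, column_lt_column_iff.mpr ?_, rfl⟩
  exact (upperMax_antitone hsu).lt_or_eq.imp_right fun heq => ⟨heq, hsv⟩

end Column

section Staircase

variable {S : Type*} [Fintype S]

def columnHeight (h col : S → ℕ) (j : ℕ) : ℕ := ({s | col s ≤ j} : Finset S).sup h

variable {h col : S → ℕ}

theorem columnHeight_mono : Monotone (columnHeight h col) := fun _ _ hjk =>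
  sup_mono fun s hs => mem_filter.mpr ⟨mem_univ s, (mem_filter.mp hs).2.trans hjk⟩

theorem le_columnHeight (s : S) : h s ≤ columnHeight h col (col s) :=
  le_sup (mem_filter.mpr ⟨mem_univ s, le_rfl⟩)

theorem one_le_columnHeight (hpos : ∀ s, 1 ≤ h s) {m j : ℕ}
    (hcol : Set.SurjOn col Set.univ (Set.Icc 1 m)) (hj : j ∈ Set.Icc 1 m) :
    1 ≤ columnHeight h col j := by
  obtain ⟨s, -, rfl⟩ := hcol hj
  exact (hpos s).trans (le_columnHeight s)

theorem max_Icc_columnHeight_sdiff (hpos : ∀ s, 1 ≤ h s) (hinj : Injective h)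
    (hcorner : ∀ s w v, col w ≤ col s → h s < v → v ≤ h w → ∃ u, col u < col s ∧ h u = v)
    (s : S) :
    (Icc 1 (columnHeight h col (col s)) \ ({u | col u < col s} : Finset S).image h).max
      = (h s : WithBot ℕ) := by
  refine le_antisymm (Finset.max_le fun v hv => ?_) (le_max ?_)
  · simp only [mem_sdiff, mem_Icc, mem_image, mem_filter, mem_univ, true_and, not_exists,
      not_and] at hv
    obtain ⟨⟨-, hvmax⟩, hvfree⟩ := hv
    obtain ⟨w, hw, hwmax⟩ := exists_mem_eq_sup ({u | col u ≤ col s} : Finset S)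
      ⟨s, mem_filter.mpr ⟨mem_univ s, le_rfl⟩⟩ h
    rw [columnHeight, hwmax] at hvmax
    by_contra! hsv
    obtain ⟨u, hus, rfl⟩ :=
      hcorner s w v (mem_filter.mp hw).2 (WithBot.coe_lt_coe.mp hsv) hvmax
    exact hvfree u hus rfl
  · simp only [mem_sdiff, mem_Icc, mem_image, mem_filter, mem_univ, true_and, not_exists,
      not_and]
    refine ⟨⟨hpos s, le_columnHeight s⟩, fun u hus hu => ?_⟩
    exact hus.ne (congrArg col (hinj hu))

theorem usedRows_columnHeight (hpos : ∀ s, 1 ≤ h s) (hinj : Injective h) {m : ℕ}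
    (hcol : Set.BijOn col Set.univ (Set.Icc 1 m))
    (hcorner : ∀ s w v, col w ≤ col s → h s < v → v ≤ h w → ∃ u, col u < col s ∧ h u = v) :
    ∀ j ≤ m, usedRows (columnHeight h col) j = ({s | col s ≤ j} : Finset S).image h := by
  intro j hjm
  induction j with
  | zero =>
    refine (image_eq_empty.mpr (filter_eq_empty_iff.mpr fun s _ => ?_)).symm
    exact Nat.not_le.mpr (hcol.mapsTo (Set.mem_univ s)).1
  | succ k ih =>
    obtain ⟨s, -, hs⟩ := hcol.surjOn (show k + 1 ∈ Set.Icc 1 m from ⟨by omega, hjm⟩)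
    have hlt : univ.filter (col · ≤ k) = univ.filter (col · < col s) := by
      simp only [hs, Nat.lt_succ_iff]
    have hcoe : WithBot.recBotCoe (C := fun _ => Finset ℕ) ∅ (fun i => {i}) (h s : WithBot ℕ)
        = {h s} := rfl
    rw [usedRows, ih (by omega), ← hs, hlt, max_Icc_columnHeight_sdiff hpos hinj hcorner, hcoe]
    ext v
    simp only [mem_union, mem_image, mem_filter, mem_univ, true_and, mem_singleton]
    constructor
    · rintro (⟨u, hu, rfl⟩ | rfl)
      exacts [⟨u, hu.le, rfl⟩, ⟨s, le_rfl, rfl⟩]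
    · rintro ⟨u, hu, rfl⟩
      rcases hu.lt_or_eq with hu | hu
      · exact Or.inl ⟨u, hu, rfl⟩
      · exact Or.inr (congrArg h (hcol.injOn (Set.mem_univ u) (Set.mem_univ s) hu))

theorem bijOn_staircaseCorners (hpos : ∀ s, 1 ≤ h s) (hinj : Injective h) {m : ℕ}
    (hcol : Set.BijOn col Set.univ (Set.Icc 1 m))
    (hcorner : ∀ s w v, col w ≤ col s → h s < v → v ≤ h w → ∃ u, col u < col s ∧ h u = v) :
    Set.BijOn (fun s => (h s, col s)) Set.univ (staircaseCorners m (columnHeight h col)) := by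
  have hmax : ∀ s, (Icc 1 (columnHeight h col (col s)) \
      usedRows (columnHeight h col) (col s - 1)).max = (h s : WithBot ℕ) := fun s => by
    obtain ⟨hs1, hsm⟩ := hcol.mapsTo (Set.mem_univ s)
    have hlt : univ.filter (col · ≤ col s - 1) = univ.filter (col · < col s) := by
      ext u; simp only [mem_filter, mem_univ, true_and]; omega
    rw [usedRows_columnHeight hpos hinj hcol hcorner _ (by omega), hlt,
      max_Icc_columnHeight_sdiff hpos hinj hcorner]
  refine ⟨fun s _ => ⟨(hcol.mapsTo (Set.mem_univ s)).1, (hcol.mapsTo (Set.mem_univ s)).2,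
    hmax s⟩, fun s _ t _ hst => hcol.injOn (Set.mem_univ s) (Set.mem_univ t) (congrArg Prod.snd hst),
    fun p ⟨hp1, hpm, hpmax⟩ => ?_⟩
  obtain ⟨s, -, hs⟩ := hcol.surjOn ⟨hp1, hpm⟩
  rw [← hs, hmax] at hpmax
  exact ⟨s, Set.mem_univ s, Prod.ext (WithBot.coe_eq_coe.mp hpmax) hs⟩

end Staircase

theorem stmt_19_general {S : Type*} [PartialOrder S] [Finite S] (N : ℕ) (h : S → ℕ)
    (hmono : Monotone h) (hinj : Function.Injective h)
    (hrange : ∀ s : S, 1 ≤ h s ∧ h s ≤ N)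
    (hint : ∀ s : S, ∃ a b : ℕ, h '' {t : S | s ≤ t} = Set.Icc a b) :
    ∃ (m : ℕ) (n : ℕ → ℕ),
      (∀ j : ℕ, 1 ≤ j → j ≤ m → 1 ≤ n j) ∧
      (∀ j : ℕ, 1 ≤ j → j + 1 ≤ m → n j ≤ n (j + 1)) ∧
      ∃ ψ : S → ℕ × ℕ,
        Set.BijOn ψ Set.univ (staircaseCorners m n) ∧
        (∀ s t : S, s ≤ t ↔ ((ψ s).1 ≤ (ψ t).1 ∧ (ψ t).2 ≤ (ψ s).2)) ∧
        (∀ s : S, h s = (ψ s).1) := by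
  have := Fintype.ofFinite S
  have hpos : ∀ s, 1 ≤ h s := fun s => (hrange s).1
  have hconn : ∀ s, (h '' Set.Ici s).OrdConnected := fun s => by
    obtain ⟨a, b, hab⟩ := hint s
    exact hab ▸ Set.ordConnected_Icc
  have hcol : Set.BijOn (column h) Set.univ (Set.Icc 1 (Fintype.card S)) := bijOn_column hinj
  refine ⟨Fintype.card S, columnHeight h (column h),
    fun j hj hjm => one_le_columnHeight hpos hcol.surjOn ⟨hj, hjm⟩,
    fun j _ _ => columnHeight_mono j.le_succ, fun s => (h s, column h s),
    bijOn_staircaseCorners hpos hinj hcol fun _ _ _ => exists_column_lt hconn,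
    fun _ _ => le_iff_column_le hmono hinj hconn, fun _ => rfl⟩

/-- Realization theorem: if `(S, ≺)` is a finite poset with a monotone injection
`h : S → [1, N]` such that every up-set `S_{⪰s}` maps onto an interval of `[1, N]`
and `N` is attained, then there is a weakly increasing positive sequence
`n 1 ≤ … ≤ n m` and an order isomorphism `ψ` from `S` onto the poset of staircase
corners of `Y_{n̄}` (ordered by `(i,j) ⪰ (i',j') ↔ i ≥ i' ∧ j ≤ j'`) with
`h = hor ∘ ψ`, i.e. `h s` is the row index of `ψ s`. -/
theorem stmt_19 {S : Type*} [PartialOrder S] [Finite S] (N : ℕ) (h : S → ℕ)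
    (hmono : Monotone h) (hinj : Function.Injective h)
    (hrange : ∀ s : S, 1 ≤ h s ∧ h s ≤ N)
    (hint : ∀ s : S, ∃ a b : ℕ, h '' {t : S | s ≤ t} = Set.Icc a b)
    (htop : ∃ s : S, h s = N) :
    ∃ (m : ℕ) (n : ℕ → ℕ),
      (∀ j : ℕ, 1 ≤ j → j ≤ m → 1 ≤ n j) ∧
      (∀ j : ℕ, 1 ≤ j → j + 1 ≤ m → n j ≤ n (j + 1)) ∧
      ∃ ψ : S → ℕ × ℕ,
        Set.BijOn ψ Set.univ (staircaseCorners m n) ∧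
        (∀ s t : S, s ≤ t ↔ ((ψ s).1 ≤ (ψ t).1 ∧ (ψ t).2 ≤ (ψ s).2)) ∧
        (∀ s : S, h s = (ψ s).1) :=
  stmt_19_general N h hmono hinj hrange hint
end
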